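/- arXiv:2102.12676 — 6 statements merged into one kernel-verified Lean document; each statement's English description precedes it below -/
import Mathlib

section
/- Let A₁,…,A_N be positive semidefinite p×p real matrices and let w, w̃ be probability vectors on {1,…,N} with strictly positive entries such that both Σᵢ wᵢ Aᵢ and Σᵢ w̃ᵢ Aᵢ are positive definite. Then log det(Σᵢ wᵢ Aᵢ) − log det(Σᵢ w̃ᵢ Aᵢ) ≥ Σᵢ w̃ᵢ · tr(Aᵢ (Σⱼ w̃ⱼ Aⱼ)⁻¹) · log(wᵢ/w̃ᵢ). -/
open Matrix BigOperators

/-- `w` is a probability vector on `{1,…,N}`. -/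
def IsProbVec {N : ℕ} (w : Fin N → ℝ) : Prop :=
  (∀ i, 0 ≤ w i) ∧ ∑ i, w i = 1

private lemma psd_smul {p : ℕ} {M : Matrix (Fin p) (Fin p) ℝ} (h : M.PosSemidef) {c : ℝ}
    (hc : 0 ≤ c) : (c • M).PosSemidef := by
  refine ⟨?_, fun x => ?_⟩
  · unfold Matrix.IsHermitian
    rw [Matrix.conjTranspose_smul, h.1.eq]
    simp
  · exact (h.smul hc).2 x

private lemma psd_diag_nonneg {p : ℕ} {M : Matrix (Fin p) (Fin p) ℝ} (h : M.PosSemidef)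
    (k : Fin p) : 0 ≤ M k k := by
  exact h.diag_nonneg

/-- Lemma 1: for positive semidefinite matrices `A i` and strictly positive probability
vectors `w`, `w̃` whose mixtures are positive definite,
`log det(∑ i, w i • A i) − log det(∑ i, w̃ i • A i)
  ≥ ∑ i, w̃ i * tr(A i (∑ j, w̃ j • A j)⁻¹) * log (w i / w̃ i)`. -/
theorem logdet_mixture_lower_bound
    (p N : ℕ) (hp : 0 < p) (hN : 0 < N)
    (A : Fin N → Matrix (Fin p) (Fin p) ℝ)
    (hA : ∀ i, (A i).PosSemidef)
    (w wt : Fin N → ℝ)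
    (hw : IsProbVec w) (hwt : IsProbVec wt)
    (hwpos : ∀ i, 0 < w i) (hwtpos : ∀ i, 0 < wt i)
    (hposw : (∑ i, w i • A i).PosDef)
    (hposwt : (∑ i, wt i • A i).PosDef) :
    ∑ i, wt i * (A i * (∑ j, wt j • A j)⁻¹).trace * Real.log (w i / wt i) ≤
      Real.log (∑ i, w i • A i).det - Real.log (∑ i, wt i • A i).det := by
  classical
  set S : Matrix (Fin p) (Fin p) ℝ := ∑ i, wt i • A i with hSdef
  set M : Matrix (Fin p) (Fin p) ℝ := ∑ i, w i • A i with hMdef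
  have hS : S.PosDef := hposwt
  have hM : M.PosDef := hposw
  set Q : Matrix (Fin p) (Fin p) ℝ := (open scoped MatrixOrder in CFC.sqrt S) with hQdef
  have hQpsd : Q.PosSemidef := by open scoped MatrixOrder in exact Matrix.nonneg_iff_posSemidef.mp (CFC.sqrt_nonneg S)
  have hQQ : Q * Q = S := by
    open scoped MatrixOrder in
    exact CFC.sqrt_mul_sqrt_self S (Matrix.nonneg_iff_posSemidef.mpr hS.posSemidef)
  have hdetS : 0 < S.det := hS.det_pos
  have hdetM : 0 < M.det := hM.det_pos
  have hdetQ : IsUnit Q.det := by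
    have h1 : Q.det * Q.det = S.det := by rw [← Matrix.det_mul, hQQ]
    refine isUnit_iff_ne_zero.mpr fun h => ?_
    rw [h, mul_zero] at h1
    exact (ne_of_gt hdetS) h1.symm
  set R : Matrix (Fin p) (Fin p) ℝ := Q⁻¹ with hRdef
  have hRQ : R * Q = 1 := Matrix.nonsing_inv_mul Q hdetQ
  have hQR : Q * R = 1 := Matrix.mul_nonsing_inv Q hdetQ
  have hRH : Rᴴ = R := by rw [hRdef, Matrix.conjTranspose_nonsing_inv, hQpsd.1.eq]
  have hRR : R * R = S⁻¹ := by rw [hRdef, ← Matrix.mul_inv_rev, hQQ]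
  -- congruence images
  set G : Fin N → Matrix (Fin p) (Fin p) ℝ := fun i => R * A i * R with hGdef
  have hGpsd : ∀ i, (G i).PosSemidef := fun i => by
    have := (hA i).mul_mul_conjTranspose_same R
    rwa [hRH] at this
  have hGtr : ∀ i, (G i).trace = (A i * S⁻¹).trace := fun i => by
    rw [hGdef, Matrix.trace_mul_cycle, hRR, Matrix.trace_mul_comm]
  have hsum : ∀ v : Fin N → ℝ, ∑ i, v i • G i = R * (∑ i, v i • A i) * R := by
    intro v
    rw [Finset.mul_sum, Finset.sum_mul]
    refine Finset.sum_congr rfl fun i _ => ?_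
    rw [hGdef, Matrix.mul_smul, Matrix.smul_mul]
  have hGsum : ∑ i, wt i • G i = 1 := by
    rw [hsum wt, ← hSdef, ← hQQ]
    rw [show R * (Q * Q) * R = (R * Q) * (Q * R) by simp only [Matrix.mul_assoc], hRQ, hQR,
      one_mul]
  set C : Matrix (Fin p) (Fin p) ℝ := ∑ i, w i • G i with hCdef
  have hCRMR : C = R * M * R := hsum w
  have hCpsd : C.PosSemidef := by
    rw [hCRMR]
    have := hM.posSemidef.mul_mul_conjTranspose_same R
    rwa [hRH] at this
  have hCH : C.IsHermitian := hCpsd.1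
  set Uv : Matrix (Fin p) (Fin p) ℝ := ↑(hCH.eigenvectorUnitary) with hUdef
  set ev : Fin p → ℝ := hCH.eigenvalues with hevdef
  have hU1 : star Uv * Uv = 1 := (Unitary.mem_iff.mp hCH.eigenvectorUnitary.2).1
  have hU2 : Uv * star Uv = 1 := (Unitary.mem_iff.mp hCH.eigenvectorUnitary.2).2
  have hdiagC : star Uv * C * Uv = Matrix.diagonal ev := by
    have := hCH.conjStarAlgAut_star_eigenvectorUnitary
    rw [Unitary.conjStarAlgAut_apply] at this
    simpa [RCLike.ofReal_real_eq_id] using this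
  -- the weights
  set q : Fin N → Fin p → ℝ := fun i k => (star Uv * (wt i • G i) * Uv) k k with hqdef
  set r : Fin N → ℝ := fun i => w i / wt i with hrdef
  have hrpos : ∀ i, 0 < r i := fun i => div_pos (hwpos i) (hwtpos i)
  have hqnn : ∀ i k, 0 ≤ q i k := by
    intro i k
    have h1 := (psd_smul (hGpsd i) (hwtpos i).le).conjTranspose_mul_mul_same Uv
    rw [← Matrix.star_eq_conjTranspose] at h1
    exact psd_diag_nonneg h1 k
  have hqsum1 : ∀ k, ∑ i, q i k = 1 := by
    intro k
    have h1 : ∑ i, star Uv * (wt i • G i) * Uv = 1 := by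
      rw [← Finset.sum_mul, ← Finset.mul_sum, hGsum, mul_one, hU1]
    calc ∑ i, q i k = (∑ i, star Uv * (wt i • G i) * Uv) k k := by
          rw [Matrix.sum_apply]
      _ = 1 := by rw [h1, Matrix.one_apply_eq]
  have hqtr : ∀ i, ∑ k, q i k = wt i * (A i * S⁻¹).trace := by
    intro i
    have h1 : ∑ k, q i k = (star Uv * (wt i • G i) * Uv).trace := by
      rw [Matrix.trace]
      simp [hqdef, Matrix.diag]
    rw [h1, Matrix.trace_mul_cycle, hU2, one_mul, Matrix.trace_smul, smul_eq_mul, hGtr i]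
  have hkey : ∀ i, r i • (wt i • G i) = w i • G i := fun i => by
    rw [smul_smul, hrdef, div_mul_cancel₀ _ (hwtpos i).ne']
  have hdiag2 : ∀ k, ev k = ∑ i, q i k * r i := by
    intro k
    have e1 : star Uv * C * Uv = ∑ i, r i • (star Uv * (wt i • G i) * Uv) := by
      rw [hCdef, Finset.mul_sum, Finset.sum_mul]
      refine Finset.sum_congr rfl fun i _ => ?_
      rw [← hkey i, Matrix.mul_smul, Matrix.smul_mul]
    calc ev k = (Matrix.diagonal ev) k k := (Matrix.diagonal_apply_eq ev k).symm
      _ = (star Uv * C * Uv) k k := by rw [hdiagC]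
      _ = ∑ i, (r i • (star Uv * (wt i • G i) * Uv)) k k := by rw [e1, Matrix.sum_apply]
      _ = ∑ i, q i k * r i := by
          refine Finset.sum_congr rfl fun i _ => ?_
          rw [Matrix.smul_apply, smul_eq_mul, mul_comm]
  have hevpos : ∀ k, 0 < ev k := by
    intro k
    have hex : ∃ i, 0 < q i k := by
      by_contra h
      push_neg at h
      have h0 : ∑ i, q i k = 0 :=
        Finset.sum_eq_zero fun i _ => le_antisymm (h i) (hqnn i k)
      rw [hqsum1 k] at h0
      norm_num at h0
    obtain ⟨i0, hi0⟩ := hex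
    rw [hdiag2 k]
    refine Finset.sum_pos' (fun i _ => mul_nonneg (hqnn i k) (hrpos i).le) ?_
    exact ⟨i0, Finset.mem_univ _, mul_pos hi0 (hrpos i0)⟩
  -- Jensen / AM-GM per eigenvalue
  have jensen : ∀ k, ∑ i, q i k * Real.log (r i) ≤ Real.log (ev k) := by
    intro k
    have am := Real.geom_mean_le_arith_mean_weighted Finset.univ (fun i => q i k) r
      (fun i _ => hqnn i k) (hqsum1 k) (fun i _ => (hrpos i).le)
    have hprodpos : 0 < ∏ i, r i ^ q i k :=
      Finset.prod_pos fun i _ => Real.rpow_pos_of_pos (hrpos i) _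
    have h2 : Real.log (∏ i, r i ^ q i k) ≤ Real.log (ev k) := by
      apply Real.log_le_log hprodpos
      calc ∏ i, r i ^ q i k ≤ ∑ i, q i k * r i := am
        _ = ev k := (hdiag2 k).symm
    calc ∑ i, q i k * Real.log (r i) = Real.log (∏ i, r i ^ q i k) := by
          rw [Real.log_prod fun i _ => (Real.rpow_pos_of_pos (hrpos i) _).ne']
          exact Finset.sum_congr rfl fun i _ => (Real.log_rpow (hrpos i) _).symm
      _ ≤ Real.log (ev k) := h2
  -- determinants
  have hdetCprod : C.det = ∏ k, ev k := by
    have := hCH.det_eq_prod_eigenvalues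
    simpa [RCLike.ofReal_real_eq_id] using this
  have hdetCpos : 0 < C.det := by
    rw [hdetCprod]; exact Finset.prod_pos fun k _ => hevpos k
  have hMQCQ : M = Q * C * Q := by
    rw [hCRMR]
    have e : Q * (R * M * R) * Q = (Q * R) * (M * (R * Q)) := by
      simp only [Matrix.mul_assoc]
    rw [e, hQR, hRQ, one_mul, mul_one]
  have hdetMSC : M.det = S.det * C.det := by
    rw [hMQCQ, Matrix.det_mul, Matrix.det_mul]
    have h1 : Q.det * Q.det = S.det := by rw [← Matrix.det_mul, hQQ]
    rw [← h1]; ring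
  have hlog : Real.log C.det = Real.log M.det - Real.log S.det := by
    rw [hdetMSC, Real.log_mul (ne_of_gt hdetS) (ne_of_gt hdetCpos)]
    ring
  -- final chain
  calc ∑ i, wt i * (A i * S⁻¹).trace * Real.log (w i / wt i)
      = ∑ i, ∑ k, q i k * Real.log (r i) := by
        refine Finset.sum_congr rfl fun i _ => ?_
        rw [← hqtr i, Finset.sum_mul]
    _ = ∑ k, ∑ i, q i k * Real.log (r i) := Finset.sum_comm
    _ ≤ ∑ k, Real.log (ev k) := Finset.sum_le_sum fun k _ => jensen k
    _ = Real.log (∏ k, ev k) := (Real.log_prod fun k _ => (hevpos k).ne').symm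
    _ = Real.log C.det := by rw [hdetCprod]
    _ = Real.log M.det - Real.log S.det := hlog
end

section
/- Let f₁,…,f_N ∈ ℝ^p and let w be a probability vector on {1,…,N} with strictly positive entries whose information matrix M(w) = Σᵢ wᵢ fᵢ fᵢᵀ is positive definite, and let w′ be the multiplicative D-optimality update of w, w′ᵢ = wᵢ fᵢᵀ M(w)⁻¹ fᵢ / p. If M(w′) is positive definite and all w′ᵢ > 0, then log det M(w′) − log det M(w) ≥ p · Σᵢ w′ᵢ log(w′ᵢ/wᵢ) ≥ 0; in particular, the log-determinant of the information matrix is nondecreasing under the update. -/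
open Matrix BigOperators

/-- Information matrix `M(w) = ∑ i, w i • f i (f i)ᵀ`. -/
noncomputable def infoMatrix {p N : ℕ} (f : Fin N → Fin p → ℝ) (w : Fin N → ℝ) :
    Matrix (Fin p) (Fin p) ℝ :=
  ∑ i, w i • vecMulVec (f i) (f i)

/-- The multiplicative D-optimality update `w′ i = w i * f iᵀ M(w)⁻¹ f i / p`. -/
noncomputable def multUpdate {p N : ℕ} (f : Fin N → Fin p → ℝ) (w : Fin N → ℝ) :
    Fin N → ℝ :=
  fun i => w i * (f i ⬝ᵥ ((infoMatrix f w)⁻¹ *ᵥ f i)) / p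

/- ### Auxiliary lemmas -/

theorem vmv_mulVec {p : ℕ} (u v x : Fin p → ℝ) : vecMulVec u v *ᵥ x = (v ⬝ᵥ x) • u := by
  ext k
  simp [vecMulVec_apply, mulVec, dotProduct, Finset.mul_sum, mul_comm, mul_assoc, mul_left_comm]

theorem sum_mulVec' {p N : ℕ} (A : Fin N → Matrix (Fin p) (Fin p) ℝ) (x : Fin p → ℝ) :
    (∑ i, A i) *ᵥ x = ∑ i, A i *ᵥ x := by
  ext k
  simp only [mulVec, dotProduct, Matrix.sum_apply, Finset.sum_apply, Finset.sum_mul]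
  exact Finset.sum_comm

theorem dotProduct_sum' {p N : ℕ} (u : Fin p → ℝ) (v : Fin N → Fin p → ℝ) :
    u ⬝ᵥ (∑ i, v i) = ∑ i, u ⬝ᵥ v i := by
  simp only [dotProduct, Finset.sum_apply, Finset.mul_sum]
  exact Finset.sum_comm

theorem quadForm {p N : ℕ} (c : Fin N → ℝ) (g : Fin N → Fin p → ℝ) (u : Fin p → ℝ) :
    u ⬝ᵥ ((∑ i, c i • vecMulVec (g i) (g i)) *ᵥ u) = ∑ i, c i * (g i ⬝ᵥ u)^2 := by
  rw [sum_mulVec']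
  simp only [smul_mulVec, vmv_mulVec]
  rw [dotProduct_sum']
  refine Finset.sum_congr rfl fun i _ => ?_
  rw [dotProduct_smul, dotProduct_smul, dotProduct_comm u (g i)]
  rw [smul_eq_mul, smul_eq_mul]
  ring

theorem conj_vmv {p : ℕ} (A : Matrix (Fin p) (Fin p) ℝ) (hA : Aᵀ = A) (u : Fin p → ℝ) :
    A * vecMulVec u u * A = vecMulVec (A *ᵥ u) (A *ᵥ u) := by
  ext a b
  simp only [Matrix.mul_apply, vecMulVec_apply, mulVec, dotProduct, Finset.sum_mul,
    Finset.mul_sum]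
  refine Finset.sum_congr rfl fun l _ => ?_
  refine Finset.sum_congr rfl fun k _ => ?_
  have hkb : A l b = A b l := by conv_lhs => rw [← hA, transpose_apply]
  rw [hkb]; ring

theorem herm_sum {p N : ℕ} (c : Fin N → ℝ) (g : Fin N → Fin p → ℝ) :
    (∑ i, c i • vecMulVec (g i) (g i)).IsHermitian := by
  show _ᴴ = _
  ext a b
  simp [conjTranspose_apply, Matrix.sum_apply, vecMulVec_apply, mul_comm]

theorem trace_vmv {p : ℕ} (u : Fin p → ℝ) : (vecMulVec u u).trace = u ⬝ᵥ u := by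
  simp [Matrix.trace, Matrix.diag, vecMulVec_apply, dotProduct]

theorem unorm {p : ℕ} (B : Matrix (Fin p) (Fin p) ℝ) (hB : B.IsHermitian) (j : Fin p) :
    (⇑(hB.eigenvectorBasis j) : Fin p → ℝ) ⬝ᵥ ⇑(hB.eigenvectorBasis j) = 1 := by
  have h := hB.eigenvectorBasis.orthonormal.1 j
  have h2 : inner (𝕜 := ℝ) (hB.eigenvectorBasis j) (hB.eigenvectorBasis j) = (1:ℝ) := by
    rw [real_inner_self_eq_norm_sq, h]; norm_num
  simp only [PiLp.inner_apply, RCLike.inner_apply, conj_trivial] at h2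
  simpa [dotProduct, PiLp.toLp_apply] using h2

theorem parseval {p : ℕ} (B : Matrix (Fin p) (Fin p) ℝ) (hB : B.IsHermitian) (x : Fin p → ℝ) :
    ∑ j, ((x ⬝ᵥ ⇑(hB.eigenvectorBasis j)) ^ 2) = x ⬝ᵥ x := by
  have h := hB.eigenvectorBasis.sum_inner_mul_inner (E := EuclideanSpace ℝ (Fin p)) (WithLp.toLp 2 x) (WithLp.toLp 2 x)
  simp only [PiLp.inner_apply, RCLike.inner_apply, conj_trivial] at h
  refine Eq.trans (Finset.sum_congr rfl fun j _ => ?_) (h.trans ?_)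
  · simp only [dotProduct, pow_two, PiLp.toLp_apply]
    congr 1
    exact Finset.sum_congr rfl fun k _ => mul_comm _ _
  · simp [dotProduct]

/-- Monotonicity of the log-determinant under the multiplicative D-optimality update:
`log det M(w′) − log det M(w) ≥ p ∑ i, w′ i log (w′ i / w i) ≥ 0`. -/
theorem logdet_multUpdate_monotone
    (p N : ℕ) (hp : 0 < p) (hN : 0 < N)
    (f : Fin N → Fin p → ℝ)
    (w : Fin N → ℝ) (hw : IsProbVec w) (hwpos : ∀ i, 0 < w i)
    (hpos : (infoMatrix f w).PosDef)
    (hpos' : (infoMatrix f (multUpdate f w)).PosDef)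
    (hwpos' : ∀ i, 0 < multUpdate f w i) :
    Real.log (infoMatrix f (multUpdate f w)).det - Real.log (infoMatrix f w).det ≥
        (p : ℝ) * ∑ i, multUpdate f w i * Real.log (multUpdate f w i / w i) ∧
      (p : ℝ) * ∑ i, multUpdate f w i * Real.log (multUpdate f w i / w i) ≥ 0 := by
  obtain ⟨hw0, hw1⟩ := hw
  have hp' : (0:ℝ) < p := Nat.cast_pos.mpr hp
  set M : Matrix (Fin p) (Fin p) ℝ := infoMatrix f w with hMdef
  set d : Fin N → ℝ := fun i => f i ⬝ᵥ (M⁻¹ *ᵥ f i) with hddef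
  set w' : Fin N → ℝ := multUpdate f w with hw'def
  set M' : Matrix (Fin p) (Fin p) ℝ := infoMatrix f w' with hM'def
  have hw'eq : ∀ i, w' i = w i * d i / p := fun i => rfl
  have hdpos : ∀ i, 0 < d i := by
    intro i
    have h := hwpos' i
    rw [hw'eq i] at h
    by_contra hc
    push_neg at hc
    have : w i * d i / p ≤ 0 :=
      div_nonpos_of_nonpos_of_nonneg (mul_nonpos_of_nonneg_of_nonpos (hwpos i).le hc) hp'.le
    linarith
  have hMps := hpos.posSemidef
  open scoped MatrixOrder in
  set S := CFC.sqrt M with hSdef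
  open scoped MatrixOrder in
  have hSS : S * S = M := CFC.sqrt_mul_sqrt_self M hMps.nonneg
  open scoped MatrixOrder in
  have hSherm := (CFC.sqrt_nonneg M).posSemidef.1
  have hSt : Sᵀ = S := by
    ext a b
    have h := congrFun (congrFun hSherm a) b
    simpa using h
  have hdetM : 0 < M.det := hpos.det_pos
  have hdetM' : 0 < M'.det := hpos'.det_pos
  have hdetS : S.det ≠ 0 := by
    intro h
    have : M.det = 0 := by rw [← hSS, det_mul, h, mul_zero]
    exact hdetM.ne' this
  have hSunit : IsUnit S.det := isUnit_iff_ne_zero.mpr hdetS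
  have hStinv : (S⁻¹)ᵀ = S⁻¹ := by rw [transpose_nonsing_inv, hSt]
  set g : Fin N → Fin p → ℝ := fun i => S⁻¹ *ᵥ f i with hgdef
  have hMinv : M⁻¹ = S⁻¹ * S⁻¹ := by rw [← hSS, Matrix.mul_inv_rev]
  have hdg : ∀ i, d i = g i ⬝ᵥ g i := by
    intro i
    show f i ⬝ᵥ (M⁻¹ *ᵥ f i) = _
    rw [hMinv, ← Matrix.mulVec_mulVec, Matrix.dotProduct_mulVec]
    congr 1
    rw [← Matrix.mulVec_transpose, hStinv]
  have hconj : ∀ c : Fin N → ℝ,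
      S⁻¹ * (∑ i, c i • vecMulVec (f i) (f i)) * S⁻¹ = ∑ i, c i • vecMulVec (g i) (g i) := by
    intro c
    rw [Finset.mul_sum, Finset.sum_mul]
    refine Finset.sum_congr rfl fun i _ => ?_
    rw [Matrix.mul_smul, Matrix.smul_mul, conj_vmv _ hStinv]
  have hIdent : ∑ i, w i • vecMulVec (g i) (g i) = 1 := by
    rw [← hconj w]
    have hM2 : (∑ i, w i • vecMulVec (f i) (f i)) = M := rfl
    rw [hM2, ← hSS, show S⁻¹ * (S * S) * S⁻¹ = (S⁻¹ * S) * (S * S⁻¹) by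
      rw [Matrix.mul_assoc, Matrix.mul_assoc, Matrix.mul_assoc],
      nonsing_inv_mul S hSunit, mul_nonsing_inv S hSunit, one_mul]
  set B := ∑ i, w' i • vecMulVec (g i) (g i) with hBdef
  have hBeq : B = S⁻¹ * M' * S⁻¹ := by
    rw [show M' = ∑ i, w' i • vecMulVec (f i) (f i) from rfl, hconj w']
  have hdetB : B.det = M'.det / M.det := by
    rw [hBeq, det_mul, det_mul, det_nonsing_inv, Ring.inverse_eq_inv', ← hSS, det_mul]
    field_simp
  have hBherm : B.IsHermitian := herm_sum w' g
  set lam := hBherm.eigenvalues with hlamdef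
  have hunorm : ∀ j, (⇑(hBherm.eigenvectorBasis j) : Fin p → ℝ) ⬝ᵥ ⇑(hBherm.eigenvectorBasis j) = 1 :=
    fun j => unorm B hBherm j
  have hlam : ∀ j, lam j = ∑ i, w' i * (g i ⬝ᵥ ⇑(hBherm.eigenvectorBasis j))^2 := by
    intro j
    have h1 : B *ᵥ ⇑(hBherm.eigenvectorBasis j) = lam j • ⇑(hBherm.eigenvectorBasis j) :=
      hBherm.mulVec_eigenvectorBasis j
    have h2 := congrArg (fun v => (⇑(hBherm.eigenvectorBasis j) : Fin p → ℝ) ⬝ᵥ v) h1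
    simp only [dotProduct_smul, smul_eq_mul] at h2
    rw [hunorm j, mul_one] at h2
    have h3 : (⇑(hBherm.eigenvectorBasis j) : Fin p → ℝ) ⬝ᵥ (B *ᵥ ⇑(hBherm.eigenvectorBasis j))
        = ∑ i, w' i * (g i ⬝ᵥ ⇑(hBherm.eigenvectorBasis j))^2 := quadForm w' g _
    exact h2.symm.trans h3
  have hone : ∀ j, ∑ i, w i * (g i ⬝ᵥ ⇑(hBherm.eigenvectorBasis j))^2 = 1 := by
    intro j
    have h := quadForm w g (⇑(hBherm.eigenvectorBasis j))
    rw [hIdent, one_mulVec, hunorm j] at h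
    exact h.symm
  have hlampos : ∀ j, 0 < lam j := by
    intro j
    have hnn : ∀ i ∈ Finset.univ, (0:ℝ) ≤ w' i * (g i ⬝ᵥ ⇑(hBherm.eigenvectorBasis j))^2 :=
      fun i _ => mul_nonneg (hwpos' i).le (sq_nonneg _)
    rcases lt_or_ge 0 (lam j) with h | h
    · exact h
    have h0 : ∑ i, w' i * (g i ⬝ᵥ ⇑(hBherm.eigenvectorBasis j))^2 = 0 :=
      le_antisymm ((hlam j).symm.trans_le h) (Finset.sum_nonneg hnn)
    have hz : ∀ i, (g i ⬝ᵥ ⇑(hBherm.eigenvectorBasis j)) = 0 := by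
      intro i
      have ht := (Finset.sum_eq_zero_iff_of_nonneg hnn).mp h0 i (Finset.mem_univ i)
      rcases mul_eq_zero.mp ht with h' | h'
      · exact absurd h' (hwpos' i).ne'
      · exact pow_eq_zero_iff (by norm_num) |>.mp h'
    have habs : (1:ℝ) = 0 := by
      rw [← hone j]
      apply Finset.sum_eq_zero
      intro i _
      rw [hz i]
      ring
    norm_num at habs
  have hparse : ∀ i, ∑ j, (g i ⬝ᵥ ⇑(hBherm.eigenvectorBasis j))^2 = d i := by
    intro i
    rw [hdg i]
    exact parseval B hBherm (g i)
  -- Jensen step, for each eigenvalue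
  have key : ∀ j, ∑ i, (w i * (g i ⬝ᵥ ⇑(hBherm.eigenvectorBasis j))^2) * Real.log (d i / p)
      ≤ Real.log (lam j) := by
    intro j
    have hpl : (0:ℝ) < ↑p * lam j := mul_pos hp' (hlampos j)
    have hsum2 : ∑ i, (w i * (g i ⬝ᵥ ⇑(hBherm.eigenvectorBasis j))^2) * d i = ↑p * lam j := by
      rw [hlam j, Finset.mul_sum]
      refine Finset.sum_congr rfl fun i _ => ?_
      rw [hw'eq i]
      field_simp
    have step : ∀ i ∈ Finset.univ,
        (w i * (g i ⬝ᵥ ⇑(hBherm.eigenvectorBasis j))^2) * Real.log (d i / p)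
        ≤ (w i * (g i ⬝ᵥ ⇑(hBherm.eigenvectorBasis j))^2) *
            (Real.log (lam j) + d i / (↑p * lam j) - 1) := by
      intro i _
      refine mul_le_mul_of_nonneg_left ?_ (mul_nonneg (hwpos i).le (sq_nonneg _))
      have hx : 0 < d i / (↑p * lam j) := div_pos (hdpos i) hpl
      have hlog := Real.log_le_sub_one_of_pos hx
      rw [Real.log_div (hdpos i).ne' hpl.ne', Real.log_mul hp'.ne' (hlampos j).ne'] at hlog
      rw [Real.log_div (hdpos i).ne' hp'.ne']
      linarith
    refine le_trans (Finset.sum_le_sum step) (le_of_eq ?_)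
    have expand : ∀ i ∈ Finset.univ, (w i * (g i ⬝ᵥ ⇑(hBherm.eigenvectorBasis j))^2) *
          (Real.log (lam j) + d i / (↑p * lam j) - 1)
        = ((w i * (g i ⬝ᵥ ⇑(hBherm.eigenvectorBasis j))^2) * Real.log (lam j)
          + ((w i * (g i ⬝ᵥ ⇑(hBherm.eigenvectorBasis j))^2) * d i) / (↑p * lam j))
          - (w i * (g i ⬝ᵥ ⇑(hBherm.eigenvectorBasis j))^2) := by
      intro i _
      field_simp
    rw [Finset.sum_congr rfl expand, Finset.sum_sub_distrib, Finset.sum_add_distrib,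
      ← Finset.sum_mul, ← Finset.sum_div, hone j, hsum2, one_mul, div_self hpl.ne']
    ring
  -- Sum over eigenvalues
  have main1 : ∑ i, (w i * d i) * Real.log (d i / p) ≤ Real.log M'.det - Real.log M.det := by
    have hs := Finset.sum_le_sum (fun j (_ : j ∈ Finset.univ) => key j)
    rw [Finset.sum_comm] at hs
    have hL : ∀ i ∈ Finset.univ,
        ∑ j, (w i * (g i ⬝ᵥ ⇑(hBherm.eigenvectorBasis j))^2) * Real.log (d i / p)
        = (w i * d i) * Real.log (d i / p) := by
      intro i _
      rw [← Finset.sum_mul]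
      congr 1
      rw [← Finset.mul_sum, hparse i]
    rw [Finset.sum_congr rfl hL] at hs
    have hR : ∑ j, Real.log (lam j) = Real.log B.det := by
      have hdet : B.det = ∏ j, lam j := by simpa using hBherm.det_eq_prod_eigenvalues
      rw [hdet, Real.log_prod]
      exact fun j _ => (hlampos j).ne'
    rw [hR, hdetB, Real.log_div hdetM'.ne' hdetM.ne'] at hs
    exact hs
  have hrhs_eq : (p:ℝ) * ∑ i, w' i * Real.log (w' i / w i)
      = ∑ i, (w i * d i) * Real.log (d i / p) := by
    rw [Finset.mul_sum]
    refine Finset.sum_congr rfl fun i _ => ?_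
    have hratio : w' i / w i = d i / p := by
      rw [hw'eq i]
      field_simp [(hwpos i).ne', hp'.ne']
      try ring
    rw [hratio, hw'eq i]
    field_simp [hp'.ne']
    try ring
  -- sum of w' is 1
  have htr : ∑ i, w i * d i = p := by
    have h := congrArg Matrix.trace hIdent
    rw [Matrix.trace_sum, Matrix.trace_one] at h
    simp only [Matrix.trace_smul, smul_eq_mul, trace_vmv] at h
    calc ∑ i, w i * d i = ∑ i, w i * (g i ⬝ᵥ g i) :=
          Finset.sum_congr rfl fun i _ => by rw [hdg i]
      _ = ↑p := by rw [Fintype.card_fin] at h; exact h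
  have hw'sum : ∑ i, w' i = 1 := by
    have h : ∑ i, w' i = (∑ i, w i * d i) / p := by
      rw [Finset.sum_div]
      exact Finset.sum_congr rfl fun i _ => hw'eq i
    rw [h, htr, div_self hp'.ne']
  -- Part 2 : nonnegativity (Gibbs)
  have part2 : 0 ≤ ∑ i, w' i * Real.log (w' i / w i) := by
    have hstep : ∀ i ∈ Finset.univ, w' i * Real.log (w i / w' i) ≤ w i - w' i := by
      intro i _
      have h1 := Real.log_le_sub_one_of_pos (div_pos (hwpos i) (hwpos' i))
      have h2 := mul_le_mul_of_nonneg_left h1 (hwpos' i).le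
      calc w' i * Real.log (w i / w' i) ≤ w' i * (w i / w' i - 1) := h2
        _ = w i - w' i := by
          field_simp [(hwpos' i).ne']
          try ring
    have hsum := Finset.sum_le_sum hstep
    rw [Finset.sum_sub_distrib, hw1, hw'sum] at hsum
    have hneg : ∑ i, w' i * Real.log (w' i / w i) = - ∑ i, w' i * Real.log (w i / w' i) := by
      rw [← Finset.sum_neg_distrib]
      refine Finset.sum_congr rfl fun i _ => ?_
      rw [Real.log_div (hwpos' i).ne' (hwpos i).ne', Real.log_div (hwpos i).ne' (hwpos' i).ne']
      ring
    rw [hneg]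
    linarith
  constructor
  · rw [ge_iff_le, hrhs_eq]
    exact main1
  · exact le_trans (by norm_num) (mul_le_mul_of_nonneg_left part2 hp'.le)
end

section
/- Let f₁,…,f_N ∈ ℝ^p with Σᵢ fᵢ fᵢᵀ positive definite, and let (w^{(n)})_{n≥0} be a sequence of probability vectors on {1,…,N} with strictly positive entries, generated by the multiplicative D-optimality update w^{(n)}ᵢ = w^{(n−1)}ᵢ · fᵢᵀ M(w^{(n−1)})⁻¹ fᵢ / p, where each information matrix M(w^{(n)}) = Σᵢ w^{(n)}ᵢ fᵢ fᵢᵀ is positive definite. Then Σᵢ |w^{(n)}ᵢ − w^{(n−1)}ᵢ| → 0 as n → ∞. -/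
open Matrix BigOperators Filter

namespace DOpt
variable {p N : ℕ} (f : Fin N → Fin p → ℝ)

noncomputable def D (k : Fin p → Fin N) : ℝ := (Matrix.of fun a b => f (k a) b).det

lemma step1 (v : Fin N → ℝ) :
    (infoMatrix f v).det = ∑ k : Fin p → Fin N, (∏ a, (v (k a) * f (k a) a)) * D f k := by
  have hrows : infoMatrix f v = Matrix.of (fun a => ∑ i, (v i * f i a) • f i) := by
    ext a b
    simp [infoMatrix, vecMulVec_apply, Finset.sum_apply, mul_assoc, Matrix.sum_apply]
  rw [hrows]
  have h0 : (Matrix.of (fun a => ∑ i, (v i * f i a) • f i)).det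
      = (detRowAlternating : (Fin p → ℝ) [⋀^Fin p]→ₗ[ℝ] ℝ).toMultilinearMap
          (fun a => ∑ i, (v i * f i a) • f i) := rfl
  rw [h0]
  rw [(detRowAlternating : (Fin p → ℝ) [⋀^Fin p]→ₗ[ℝ] ℝ).toMultilinearMap.map_sum
      (fun a i => (v i * f i a) • f i)]
  refine Finset.sum_congr rfl fun k _ => ?_
  have h1 := (detRowAlternating : (Fin p → ℝ) [⋀^Fin p]→ₗ[ℝ] ℝ).toMultilinearMap.map_smul_univ
      (fun a => v (k a) * f (k a) a) (fun a => f (k a))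
  rw [h1, smul_eq_mul]
  rfl

lemma D_comp_perm (m : Fin p → Fin N) (σ : Equiv.Perm (Fin p)) :
    D f (m ∘ σ) = ((Equiv.Perm.sign σ : ℤ) : ℝ) * D f m := by
  have : (Matrix.of fun a b => f ((m ∘ σ) a) b)
      = (Matrix.of fun a b => f (m a) b).submatrix σ id := rfl
  rw [D, this, Matrix.det_permute]
  rfl

lemma D_expand (m : Fin p → Fin N) : D f m
    = ∑ σ : Equiv.Perm (Fin p), ((Equiv.Perm.sign σ : ℤ) : ℝ) * ∏ a, f (m (σ a)) a := by
  rw [D, Matrix.det_apply']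
  rfl

lemma lemA (v : Fin N → ℝ) :
    (p.factorial : ℝ) * (infoMatrix f v).det
      = ∑ k : Fin p → Fin N, (∏ a, v (k a)) * (D f k) ^ 2 := by
  have hσ : ∀ σ : Equiv.Perm (Fin p),
      (infoMatrix f v).det = ∑ m : Fin p → Fin N,
        (∏ a, v (m a)) * D f m * (((Equiv.Perm.sign σ : ℤ) : ℝ) * ∏ a, f (m (σ a)) a) := by
    intro σ
    rw [step1]
    refine (Fintype.sum_equiv (Equiv.arrowCongr σ.symm (Equiv.refl (Fin N)))
        _ _ fun m => ?_).symm
    have he : (Equiv.arrowCongr σ.symm (Equiv.refl (Fin N))) m = m ∘ σ := by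
      funext a; simp [Equiv.arrowCongr]
    rw [he, D_comp_perm]
    have h2 : (∏ a, (v ((m ∘ σ) a) * f ((m ∘ σ) a) a))
        = (∏ a, v ((m ∘ σ) a)) * (∏ a, f (m (σ a)) a) := by
      rw [Finset.prod_mul_distrib]; rfl
    have h3 : (∏ a, v ((m ∘ σ) a)) = ∏ a, v (m a) :=
      Equiv.prod_comp σ (fun a => v (m a))
    rw [h2, h3]
    ring
  have hcard : (Finset.univ : Finset (Equiv.Perm (Fin p))).card = p.factorial := by
    rw [Finset.card_univ, Fintype.card_perm, Fintype.card_fin]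
  calc (p.factorial : ℝ) * (infoMatrix f v).det
      = ∑ _σ : Equiv.Perm (Fin p), (infoMatrix f v).det := by
        rw [Finset.sum_const, hcard, nsmul_eq_mul]
    _ = ∑ σ : Equiv.Perm (Fin p), ∑ m : Fin p → Fin N,
          (∏ a, v (m a)) * D f m * (((Equiv.Perm.sign σ : ℤ) : ℝ) * ∏ a, f (m (σ a)) a) :=
        Finset.sum_congr rfl fun σ _ => hσ σ
    _ = ∑ m : Fin p → Fin N, ∑ σ : Equiv.Perm (Fin p),
          (∏ a, v (m a)) * D f m * (((Equiv.Perm.sign σ : ℤ) : ℝ) * ∏ a, f (m (σ a)) a) :=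
        Finset.sum_comm
    _ = ∑ k : Fin p → Fin N, (∏ a, v (k a)) * (D f k) ^ 2 := by
        refine Finset.sum_congr rfl fun m _ => ?_
        rw [← Finset.mul_sum, ← D_expand]
        ring

lemma det_add_vecMulVec (A : Matrix (Fin p) (Fin p) ℝ) (hA : IsUnit A.det) (x : Fin p → ℝ) :
    (A + vecMulVec x x).det = A.det * (1 + x ⬝ᵥ A⁻¹ *ᵥ x) := by
  rw [vecMulVec_eq Unit, Matrix.det_add_replicateCol_mul_replicateRow hA]
  congr 1
  rw [Matrix.det_unique]
  simp [Matrix.add_apply, Matrix.mul_apply, Matrix.one_apply, mulVec, dotProduct,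
    Finset.sum_mul, Finset.mul_sum]
  rw [Finset.sum_comm]
  exact Finset.sum_congr rfl fun a _ => Finset.sum_congr rfl fun b _ => by ring

lemma per_k (u : Fin N → ℝ) (i : Fin N) (k : Fin p → Fin N) :
    (∏ a, (u (k a) + if k a = i then 1 else 0)) * (D f k) ^ 2
      = (∏ a, u (k a)) * (D f k) ^ 2
        + (∑ a, if k a = i then ∏ b ∈ Finset.univ.erase a, u (k b) else 0) * (D f k) ^ 2 := by
  by_cases hD : D f k = 0
  · simp [hD]
  · have hsub : ∀ a₁ a₂ : Fin p, k a₁ = i → k a₂ = i → a₁ = a₂ := by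
      intro a₁ a₂ h₁ h₂
      by_contra hne
      exact hD (Matrix.det_zero_of_row_eq hne (funext fun b => by
        show f (k a₁) b = f (k a₂) b
        rw [h₁, h₂]))
    by_cases hex : ∃ a₀, k a₀ = i
    · obtain ⟨a₀, ha₀⟩ := hex
      have hiff : ∀ a, (k a = i) ↔ (a = a₀) := fun a =>
        ⟨fun h => hsub a a₀ h ha₀, fun h => h ▸ ha₀⟩
      have hsum : (∑ a, if k a = i then ∏ b ∈ Finset.univ.erase a, u (k b) else 0)
          = ∏ b ∈ Finset.univ.erase a₀, u (k b) := by
        rw [Finset.sum_congr rfl fun a _ => if_congr (hiff a) rfl rfl,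
          Finset.sum_ite_eq' Finset.univ a₀ (fun a => ∏ b ∈ Finset.univ.erase a, u (k b)),
          if_pos (Finset.mem_univ a₀)]
      have hprod1 : (∏ a, (u (k a) + if k a = i then 1 else 0))
          = (u (k a₀) + 1) * ∏ b ∈ Finset.univ.erase a₀, u (k b) := by
        rw [← Finset.mul_prod_erase Finset.univ _ (Finset.mem_univ a₀), if_pos ha₀]
        congr 1
        refine Finset.prod_congr rfl fun b hb => ?_
        rw [if_neg, add_zero]
        intro hbi
        exact (Finset.mem_erase.mp hb).1 (hiff b |>.mp hbi)
      have hprod2 : (∏ a, u (k a))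
          = u (k a₀) * ∏ b ∈ Finset.univ.erase a₀, u (k b) :=
        (Finset.mul_prod_erase Finset.univ _ (Finset.mem_univ a₀)).symm
      rw [hsum, hprod1, hprod2]
      ring
    · push_neg at hex
      have h1 : (∏ a, (u (k a) + if k a = i then 1 else 0)) = ∏ a, u (k a) :=
        Finset.prod_congr rfl fun a _ => by rw [if_neg (hex a), add_zero]
      have h2 : (∑ a, if k a = i then ∏ b ∈ Finset.univ.erase a, u (k b) else 0) = 0 :=
        Finset.sum_eq_zero fun a _ => if_neg (hex a)
      rw [h1, h2]
      ring

lemma infoMatrix_add_single (u : Fin N → ℝ) (i : Fin N) :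
    infoMatrix f (fun j => u j + if j = i then 1 else 0)
      = infoMatrix f u + vecMulVec (f i) (f i) := by
  unfold infoMatrix
  have : ∀ j : Fin N, (fun j => u j + if j = i then 1 else 0) j • vecMulVec (f j) (f j)
      = u j • vecMulVec (f j) (f j) + (if j = i then vecMulVec (f j) (f j) else 0) := by
    intro j
    by_cases hj : j = i <;> simp [hj, add_smul]
  rw [Finset.sum_congr rfl fun j _ => this j, Finset.sum_add_distrib,
    Finset.sum_ite_eq' Finset.univ i (fun j => vecMulVec (f j) (f j)),
    if_pos (Finset.mem_univ i)]

lemma sum_Y (u : Fin N → ℝ) (hdet : IsUnit (infoMatrix f u).det) (i : Fin N) :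
    ∑ k : Fin p → Fin N,
        (∑ a, if k a = i then ∏ b ∈ Finset.univ.erase a, u (k b) else 0) * (D f k) ^ 2
      = (p.factorial : ℝ) * (infoMatrix f u).det
          * (f i ⬝ᵥ ((infoMatrix f u)⁻¹ *ᵥ f i)) := by
  have h1 := lemA f (fun j => u j + if j = i then 1 else 0)
  rw [infoMatrix_add_single f u i, det_add_vecMulVec (infoMatrix f u) hdet (f i)] at h1
  have h2 : ∑ k : Fin p → Fin N, (∏ a, (u (k a) + if k a = i then 1 else 0)) * (D f k) ^ 2
      = ∑ k : Fin p → Fin N, ((∏ a, u (k a)) * (D f k) ^ 2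
        + (∑ a, if k a = i then ∏ b ∈ Finset.univ.erase a, u (k b) else 0) * (D f k) ^ 2) :=
    Finset.sum_congr rfl fun k _ => per_k f u i k
  rw [h2, Finset.sum_add_distrib, ← lemA f u] at h1
  linarith [h1]

lemma lemB (u v : Fin N → ℝ) (hu : ∀ i, 0 < u i) (hv : ∀ i, 0 < v i)
    (hpd : (infoMatrix f u).PosDef) (hpdv : (infoMatrix f v).PosDef) :
    ∑ i, (u i * (f i ⬝ᵥ ((infoMatrix f u)⁻¹ *ᵥ f i))) * Real.log (v i / u i)
      ≤ Real.log (infoMatrix f v).det - Real.log (infoMatrix f u).det := by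
  classical
  set d : Fin N → ℝ := fun i => f i ⬝ᵥ ((infoMatrix f u)⁻¹ *ᵥ f i) with hd
  set L : Fin N → ℝ := fun i => Real.log (v i / u i) with hL
  have hdetu : 0 < (infoMatrix f u).det := hpd.det_pos
  have hdetv : 0 < (infoMatrix f v).det := hpdv.det_pos
  have hpfac : 0 < (p.factorial : ℝ) := by positivity
  set T : ℝ := (p.factorial : ℝ) * (infoMatrix f u).det with hT
  have hT0 : 0 < T := mul_pos hpfac hdetu
  set c : (Fin p → Fin N) → ℝ := fun k => (D f k) ^ 2 with hc
  set q : (Fin p → Fin N) → ℝ := fun k => (∏ a, u (k a)) * c k / T with hq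
  set x : (Fin p → Fin N) → ℝ := fun k => ∏ a, (v (k a) / u (k a)) with hx
  have hq0 : ∀ k ∈ (Finset.univ : Finset (Fin p → Fin N)), 0 ≤ q k := fun k _ =>
    div_nonneg (mul_nonneg (Finset.prod_nonneg fun a _ => (hu (k a)).le) (sq_nonneg _)) hT0.le
  have hq1 : ∑ k : Fin p → Fin N, q k = 1 := by
    simp only [hq]
    rw [← Finset.sum_div, hc, ← lemA f u, ← hT, div_self hT0.ne']
  have hxpos : ∀ k, 0 < x k := fun k =>
    Finset.prod_pos fun a _ => div_pos (hv (k a)) (hu (k a))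
  have hqx : ∑ k : Fin p → Fin N, q k * x k = (infoMatrix f v).det / (infoMatrix f u).det := by
    have hterm : ∀ k : Fin p → Fin N, q k * x k = (∏ a, v (k a)) * c k / T := by
      intro k
      have huv : (∏ a, u (k a)) * (∏ a, (v (k a) / u (k a))) = ∏ a, v (k a) := by
        rw [← Finset.prod_mul_distrib]
        exact Finset.prod_congr rfl fun a _ => mul_div_cancel₀ _ (hu (k a)).ne'
      simp only [hq, hx]
      rw [div_mul_eq_mul_div, mul_right_comm, huv]
    rw [Finset.sum_congr rfl fun k _ => hterm k, ← Finset.sum_div, hc, ← lemA f v, hT,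
      mul_div_mul_left _ _ hpfac.ne']
  have hjensen : ∑ k : Fin p → Fin N, q k * Real.log (x k)
      ≤ Real.log (∑ k : Fin p → Fin N, q k * x k) := by
    have hgm := Real.geom_mean_le_arith_mean_weighted Finset.univ q x hq0 hq1
      (fun k _ => (hxpos k).le)
    have hprodpos : 0 < ∏ k : Fin p → Fin N, x k ^ q k :=
      Finset.prod_pos fun k _ => Real.rpow_pos_of_pos (hxpos k) _
    have hlog := Real.log_le_log hprodpos hgm
    rw [Real.log_prod (fun k _ => (Real.rpow_pos_of_pos (hxpos k) _).ne')] at hlog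
    calc ∑ k : Fin p → Fin N, q k * Real.log (x k)
        = ∑ k : Fin p → Fin N, Real.log (x k ^ q k) :=
          Finset.sum_congr rfl fun k _ => (Real.log_rpow (hxpos k) _).symm
      _ ≤ Real.log (∑ k : Fin p → Fin N, q k * x k) := hlog
  -- rearrange the left-hand side
  have hlogx : ∀ k : Fin p → Fin N, Real.log (x k) = ∑ a, L (k a) := by
    intro k
    simp only [hx]
    rw [Real.log_prod (fun a _ => (div_pos (hv (k a)) (hu (k a))).ne')]
  have e1 : ∀ k : Fin p → Fin N, q k * Real.log (x k)
      = (c k * ∑ a, (u (k a) * L (k a) * ∏ b ∈ Finset.univ.erase a, u (k b))) / T := by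
    intro k
    have h2 : ∀ a : Fin p, u (k a) * L (k a) * ∏ b ∈ Finset.univ.erase a, u (k b)
        = (∏ b, u (k b)) * L (k a) := by
      intro a
      rw [← Finset.mul_prod_erase Finset.univ (fun b => u (k b)) (Finset.mem_univ a)]
      ring
    rw [hlogx k, Finset.sum_congr rfl fun a _ => h2 a, ← Finset.mul_sum]
    simp only [hq]
    ring
  have swap : ∑ i, (u i * L i)
        * (∑ k : Fin p → Fin N,
            (∑ a, if k a = i then ∏ b ∈ Finset.univ.erase a, u (k b) else 0) * c k)
      = ∑ k : Fin p → Fin N, c k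
          * ∑ a, (u (k a) * L (k a) * ∏ b ∈ Finset.univ.erase a, u (k b)) := by
    simp only [Finset.mul_sum, Finset.sum_mul]
    rw [Finset.sum_comm]
    refine Finset.sum_congr rfl fun k _ => ?_
    rw [Finset.sum_comm]
    refine Finset.sum_congr rfl fun a _ => ?_
    simp only [mul_ite, ite_mul, mul_zero, zero_mul]
    rw [Finset.sum_ite_eq Finset.univ (k a)
      (fun i => u i * L i * ((∏ b ∈ Finset.univ.erase a, u (k b)) * c k)),
      if_pos (Finset.mem_univ _)]
    ring
  have hrearr : ∑ k : Fin p → Fin N, q k * Real.log (x k) = ∑ i, (u i * d i) * L i := by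
    rw [Finset.sum_congr rfl fun k _ => e1 k, ← Finset.sum_div, ← swap]
    have hY : ∀ i, (∑ k : Fin p → Fin N,
        (∑ a, if k a = i then ∏ b ∈ Finset.univ.erase a, u (k b) else 0) * c k) = T * d i := by
      intro i
      have := sum_Y f u (isUnit_iff_ne_zero.mpr hdetu.ne') i
      simp only [hc, hT, hd]
      rw [this]
    rw [Finset.sum_congr rfl fun i _ => by rw [hY i], Finset.sum_div]
    refine Finset.sum_congr rfl fun i _ => ?_
    field_simp
  rw [hrearr, hqx, Real.log_div hdetv.ne' hdetu.ne'] at hjensen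
  exact hjensen

lemma det_le (v : Fin N → ℝ) (h0 : ∀ i, 0 ≤ v i) (h1 : ∀ i, v i ≤ 1) :
    (infoMatrix f v).det ≤ (∑ i, vecMulVec (f i) (f i)).det := by
  have hone : infoMatrix f (fun _ => (1:ℝ)) = ∑ i, vecMulVec (f i) (f i) := by
    simp [infoMatrix]
  have hpfac : 0 < (p.factorial : ℝ) := by positivity
  rw [← hone, ← mul_le_mul_iff_right₀ hpfac, lemA f v, lemA f (fun _ => 1)]
  refine Finset.sum_le_sum fun k _ => ?_
  refine mul_le_mul_of_nonneg_right ?_ (sq_nonneg _)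
  calc ∏ a, v (k a) ≤ 1 :=
        Finset.prod_le_one (fun a _ => h0 (k a)) (fun a _ => h1 (k a))
    _ = ∏ _a : Fin p, (1:ℝ) := by rw [Finset.prod_const_one]

end DOpt

lemma jensen_log {ι : Type*} (s : Finset ι) (q x : ι → ℝ) (hq0 : ∀ i ∈ s, 0 ≤ q i)
    (hq1 : ∑ i ∈ s, q i = 1) (hx : ∀ i ∈ s, 0 < x i) :
    ∑ i ∈ s, q i * Real.log (x i) ≤ Real.log (∑ i ∈ s, q i * x i) := by
  have hgm := Real.geom_mean_le_arith_mean_weighted s q x hq0 hq1 (fun i hi => (hx i hi).le)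
  have hprodpos : 0 < ∏ i ∈ s, x i ^ q i :=
    Finset.prod_pos fun i hi => Real.rpow_pos_of_pos (hx i hi) _
  have hlog := Real.log_le_log hprodpos hgm
  rw [Real.log_prod (fun i hi => (Real.rpow_pos_of_pos (hx i hi) _).ne')] at hlog
  calc ∑ i ∈ s, q i * Real.log (x i)
      = ∑ i ∈ s, Real.log (x i ^ q i) :=
        Finset.sum_congr rfl fun i hi => (Real.log_rpow (hx i hi) _).symm
    _ ≤ Real.log (∑ i ∈ s, q i * x i) := hlog

lemma pinsker_lite {N : ℕ} (u b : Fin N → ℝ) (hu : ∀ i, 0 < u i) (hb : ∀ i, 0 < b i)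
    (hu1 : ∑ i, u i = 1) (hb1 : ∑ i, b i = 1) :
    (∑ i, |b i - u i|) ^ 2 ≤ 4 * ∑ i, b i * Real.log (b i / u i) := by
  classical
  set KL : ℝ := ∑ i, b i * Real.log (b i / u i) with hKL
  set S : ℝ := ∑ i, Real.sqrt (b i * u i) with hS
  have hne : (Finset.univ : Finset (Fin N)).Nonempty := by
    by_contra h
    rw [Finset.not_nonempty_iff_eq_empty] at h
    rw [h, Finset.sum_empty] at hb1
    norm_num at hb1
  have hSpos : 0 < S :=
    Finset.sum_pos (fun i _ => Real.sqrt_pos.mpr (mul_pos (hb i) (hu i))) hne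
  -- Jensen step
  have hj := jensen_log Finset.univ b (fun i => Real.sqrt (u i / b i))
    (fun i _ => (hb i).le) hb1 (fun i _ => Real.sqrt_pos.mpr (div_pos (hu i) (hb i)))
  have h1 : ∀ i, b i * Real.sqrt (u i / b i) = Real.sqrt (b i * u i) := by
    intro i
    rw [Real.sqrt_div (hu i).le, Real.sqrt_mul (hb i).le]
    rw [show b i = Real.sqrt (b i) * Real.sqrt (b i) from
      (Real.mul_self_sqrt (hb i).le).symm]
    have hsb : Real.sqrt (b i) ≠ 0 := (Real.sqrt_pos.mpr (hb i)).ne'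
    field_simp
    rw [Real.sq_sqrt (sq_nonneg _)]
    ring
  have h2 : ∀ i, Real.log (Real.sqrt (u i / b i))
      = (Real.log (u i) - Real.log (b i)) / 2 := by
    intro i
    rw [Real.log_sqrt (div_pos (hu i) (hb i)).le, Real.log_div (hu i).ne' (hb i).ne']
  have hKLform : ∀ i, b i * Real.log (b i / u i)
      = b i * (Real.log (b i) - Real.log (u i)) := by
    intro i
    rw [Real.log_div (hb i).ne' (hu i).ne']
  have hjlhs : ∑ i, b i * Real.log (Real.sqrt (u i / b i)) = -(KL / 2) := by
    rw [hKL]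
    rw [Finset.sum_congr rfl fun i _ => by rw [h2 i],
      Finset.sum_congr (rfl : (Finset.univ : Finset (Fin N)) = _)
        (fun i (_ : i ∈ Finset.univ) => hKLform i)]
    rw [neg_div', ← Finset.sum_neg_distrib, Finset.sum_div]
    exact Finset.sum_congr rfl fun i _ => by ring
  rw [Finset.sum_congr (rfl : (Finset.univ : Finset (Fin N)) = _)
      (fun i (_ : i ∈ Finset.univ) => h1 i), ← hS] at hj
  rw [hjlhs] at hj
  have hlogS : Real.log S ≤ S - 1 := Real.log_le_sub_one_of_pos hSpos
  -- KL ≥ 2 - 2S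
  have hKLlb : 2 - 2 * S ≤ KL := by linarith
  -- hellinger identity
  have hhel : ∑ i, (Real.sqrt (b i) - Real.sqrt (u i)) ^ 2 = 2 - 2 * S := by
    have hterm : ∀ i : Fin N, (Real.sqrt (b i) - Real.sqrt (u i)) ^ 2
        = b i + u i - 2 * Real.sqrt (b i * u i) := by
      intro i
      rw [sub_sq, Real.sq_sqrt (hb i).le, Real.sq_sqrt (hu i).le,
        Real.sqrt_mul (hb i).le]
      ring
    rw [Finset.sum_congr rfl fun i _ => hterm i]
    rw [Finset.sum_sub_distrib, Finset.sum_add_distrib, hb1, hu1, ← Finset.mul_sum, ← hS]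
    norm_num
  -- Cauchy-Schwarz
  have habs : ∀ i : Fin N, |b i - u i|
      = |Real.sqrt (b i) - Real.sqrt (u i)| * (Real.sqrt (b i) + Real.sqrt (u i)) := by
    intro i
    have hfac : b i - u i
        = (Real.sqrt (b i) - Real.sqrt (u i)) * (Real.sqrt (b i) + Real.sqrt (u i)) := by
      have hbb := Real.mul_self_sqrt (hb i).le
      have huu := Real.mul_self_sqrt (hu i).le
      nlinarith [hbb, huu]
    rw [hfac, abs_mul, abs_of_nonneg (by positivity :
      (0:ℝ) ≤ Real.sqrt (b i) + Real.sqrt (u i))]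
  have hcs := Finset.sum_mul_sq_le_sq_mul_sq Finset.univ
    (fun i => |Real.sqrt (b i) - Real.sqrt (u i)|)
    (fun i => Real.sqrt (b i) + Real.sqrt (u i))
  have hsqabs : ∀ i : Fin N, |Real.sqrt (b i) - Real.sqrt (u i)| ^ 2
      = (Real.sqrt (b i) - Real.sqrt (u i)) ^ 2 := fun i => sq_abs _
  have hB : ∑ i, (Real.sqrt (b i) + Real.sqrt (u i)) ^ 2 ≤ 4 := by
    have hterm : ∀ i : Fin N, (Real.sqrt (b i) + Real.sqrt (u i)) ^ 2
        ≤ 2 * (b i + u i) := by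
      intro i
      have hbb := Real.sq_sqrt (hb i).le
      have huu := Real.sq_sqrt (hu i).le
      nlinarith [sq_nonneg (Real.sqrt (b i) - Real.sqrt (u i))]
    calc ∑ i, (Real.sqrt (b i) + Real.sqrt (u i)) ^ 2
        ≤ ∑ i, 2 * (b i + u i) := Finset.sum_le_sum fun i _ => hterm i
      _ = 4 := by
          rw [← Finset.mul_sum, Finset.sum_add_distrib, hb1, hu1]
          norm_num
  calc (∑ i, |b i - u i|) ^ 2
      = (∑ i, |Real.sqrt (b i) - Real.sqrt (u i)|
          * (Real.sqrt (b i) + Real.sqrt (u i))) ^ 2 := by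
        rw [Finset.sum_congr rfl fun i _ => habs i]
    _ ≤ (∑ i, |Real.sqrt (b i) - Real.sqrt (u i)| ^ 2)
          * ∑ i, (Real.sqrt (b i) + Real.sqrt (u i)) ^ 2 := hcs
    _ = (∑ i, (Real.sqrt (b i) - Real.sqrt (u i)) ^ 2)
          * ∑ i, (Real.sqrt (b i) + Real.sqrt (u i)) ^ 2 := by
        rw [Finset.sum_congr rfl fun i _ => hsqabs i]
    _ ≤ 4 * KL := by
        have h2S : 0 ≤ 2 - 2 * S := by
          rw [← hhel]
          exact Finset.sum_nonneg fun i _ => sq_nonneg _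
        have hBnn : 0 ≤ ∑ i, (Real.sqrt (b i) + Real.sqrt (u i)) ^ 2 :=
          Finset.sum_nonneg fun i _ => sq_nonneg _
        rw [hhel]
        nlinarith

/-- Theorem 2 (convergence of the multiplicative algorithm): along a sequence of
strictly positive probability vectors generated by the multiplicative D-optimality
update, `∑ i, |w⁽ⁿ⁾ i − w⁽ⁿ⁻¹⁾ i| → 0` as `n → ∞`. -/
theorem multUpdate_successive_differences_tendsto_zero
    (p N : ℕ) (hp : 0 < p) (hN : 0 < N)
    (f : Fin N → Fin p → ℝ)
    (htot : (∑ i, vecMulVec (f i) (f i)).PosDef)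
    (w : ℕ → Fin N → ℝ)
    (hprob : ∀ n, IsProbVec (w n))
    (hwpos : ∀ n i, 0 < w n i)
    (hposdef : ∀ n, (infoMatrix f (w n)).PosDef)
    (hupdate : ∀ n i,
      w (n + 1) i = w n i * (f i ⬝ᵥ ((infoMatrix f (w n))⁻¹ *ᵥ f i)) / p) :
    Tendsto (fun n => ∑ i, |w (n + 1) i - w n i|) atTop (nhds 0) := by
  classical
  set Dl : ℕ → ℝ := fun n => Real.log (infoMatrix f (w n)).det with hDl
  set KL : ℕ → ℝ := fun n => ∑ i, w (n+1) i * Real.log (w (n+1) i / w n i) with hKL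
  have hp' : (0:ℝ) < p := by exact_mod_cast hp
  have hud : ∀ n i, w n i * (f i ⬝ᵥ ((infoMatrix f (w n))⁻¹ *ᵥ f i))
      = p * w (n + 1) i := by
    intro n i
    rw [hupdate n i]
    field_simp
  have hstep : ∀ n, (p:ℝ) * KL n ≤ Dl (n+1) - Dl n := by
    intro n
    have hB := DOpt.lemB f (w n) (w (n+1)) (hwpos n) (hwpos (n+1)) (hposdef n) (hposdef (n+1))
    have heq : ∑ i, (w n i * (f i ⬝ᵥ ((infoMatrix f (w n))⁻¹ *ᵥ f i)))
        * Real.log (w (n+1) i / w n i) = (p:ℝ) * KL n := by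
      simp only [hKL]
      rw [Finset.mul_sum]
      exact Finset.sum_congr rfl fun i _ => by rw [hud n i]; ring
    rw [heq] at hB
    simpa only [hDl] using hB
  have hpin : ∀ n, (∑ i, |w (n+1) i - w n i|) ^ 2 ≤ 4 * KL n := fun n =>
    pinsker_lite (w n) (w (n+1)) (hwpos n) (hwpos (n+1)) (hprob n).2 (hprob (n+1)).2
  have hKL0 : ∀ n, 0 ≤ KL n := by
    intro n
    nlinarith [hpin n, sq_nonneg (∑ i, |w (n+1) i - w n i|)]
  have hmono : Monotone Dl := monotone_nat_of_le_succ fun n => by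
    nlinarith [hstep n, hKL0 n, hp']
  have hbdd : BddAbove (Set.range Dl) := by
    refine ⟨Real.log (∑ i, vecMulVec (f i) (f i)).det, ?_⟩
    rintro _ ⟨n, rfl⟩
    simp only [hDl]
    refine Real.log_le_log (hposdef n).det_pos ?_
    refine DOpt.det_le f (w n) (fun i => (hwpos n i).le) (fun i => ?_)
    calc w n i ≤ ∑ j, w n j :=
          Finset.single_le_sum (fun j _ => (hprob n).1 j) (Finset.mem_univ i)
      _ = 1 := (hprob n).2
  have hconv := tendsto_atTop_ciSup hmono hbdd
  have hshift : Tendsto (fun n => Dl (n+1)) atTop (nhds (⨆ n, Dl n)) :=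
    hconv.comp (tendsto_add_atTop_nat 1)
  have hdiff : Tendsto (fun n => Dl (n+1) - Dl n) atTop (nhds 0) := by
    have h := hshift.sub hconv
    rwa [sub_self] at h
  have hKLtend : Tendsto KL atTop (nhds 0) := by
    refine squeeze_zero (g := fun n => (Dl (n+1) - Dl n) / (p:ℝ)) hKL0 (fun n => ?_) ?_
    · exact (le_div_iff₀ hp').mpr (by linarith [hstep n])
    · have h := hdiff.div_const (p : ℝ)
      simpa using h
  refine squeeze_zero (g := fun n => Real.sqrt (4 * KL n))
    (fun n => Finset.sum_nonneg fun i _ => abs_nonneg _) (fun n => ?_) ?_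
  · rw [← Real.sqrt_sq (Finset.sum_nonneg fun i _ => abs_nonneg _ :
      (0:ℝ) ≤ ∑ i, |w (n+1) i - w n i|)]
    exact Real.sqrt_le_sqrt (hpin n)
  · have h1 : Tendsto (fun n => 4 * KL n) atTop (nhds (4 * 0)) := hKLtend.const_mul 4
    have h2 := h1.sqrt
    simpa using h2
end

section
/- Let f₁,…,f_N ∈ ℝ^p and let w* be a probability vector on {1,…,N} whose information matrix M(w*) = Σᵢ w*ᵢ fᵢ fᵢᵀ is positive definite. Then w* minimizes w ↦ tr(M(w)⁻¹) over all probability vectors w with M(w) positive definite (i.e., w* is A-optimal) if and only if for every probability vector w on {1,…,N} one has tr( M(w*)⁻¹ M(w) M(w*)⁻¹ ) ≤ tr( M(w*)⁻¹ ). -/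
open Matrix BigOperators

section AuxLemmas

variable {p N : ℕ}

private lemma psd_trace_nonneg {M : Matrix (Fin p) (Fin p) ℝ} (hM : M.PosSemidef) :
    0 ≤ M.trace := by
  refine Finset.sum_nonneg fun j _ => ?_
  simpa [Matrix.mulVec_single, single_dotProduct] using hM.dotProduct_mulVec_nonneg (Pi.single j 1)

private lemma trace_conj_sum (M X : Matrix (Fin p) (Fin p) ℝ) :
    (Xᵀ * M * X).trace = ∑ j, (fun k => X k j) ⬝ᵥ (M *ᵥ fun k => X k j) := by
  simp only [Matrix.trace, Matrix.diag, Matrix.mul_apply, Matrix.mulVec, dotProduct,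
    Matrix.transpose_apply, Finset.sum_mul, Finset.mul_sum]
  refine Finset.sum_congr rfl fun j _ => ?_
  rw [Finset.sum_comm]
  refine Finset.sum_congr rfl fun k _ => Finset.sum_congr rfl fun l _ => by ring

private lemma quad_inv_mono {A C : Matrix (Fin p) (Fin p) ℝ} (hA : A.PosDef) (hC : C.PosDef)
    (h : ∀ x, x ⬝ᵥ A *ᵥ x ≤ x ⬝ᵥ C *ᵥ x) (y : Fin p → ℝ) :
    y ⬝ᵥ C⁻¹ *ᵥ y ≤ y ⬝ᵥ A⁻¹ *ᵥ y := by
  have hAd : IsUnit A.det := hA.det_pos.ne'.isUnit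
  have hCd : IsUnit C.det := hC.det_pos.ne'.isUnit
  have hAs : Aᵀ = A := by simpa using hA.isHermitian.eq
  set x : Fin p → ℝ := C⁻¹ *ᵥ y with hx
  have key : ∀ z : Fin p → ℝ, 2 * (z ⬝ᵥ y) - z ⬝ᵥ A *ᵥ z ≤ y ⬝ᵥ A⁻¹ *ᵥ y := by
    intro z
    have h0 : 0 ≤ (z - A⁻¹ *ᵥ y) ⬝ᵥ A *ᵥ (z - A⁻¹ *ᵥ y) := by
      simpa using hA.posSemidef.dotProduct_mulVec_nonneg (z - A⁻¹ *ᵥ y)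
    have e1 : A *ᵥ (A⁻¹ *ᵥ y) = y := by
      rw [Matrix.mulVec_mulVec, Matrix.mul_nonsing_inv A hAd, Matrix.one_mulVec]
    have e2 : (A⁻¹ *ᵥ y) ⬝ᵥ (A *ᵥ z) = y ⬝ᵥ z := by
      rw [Matrix.dotProduct_mulVec, ← Matrix.mulVec_transpose, hAs, e1]
    rw [Matrix.mulVec_sub, sub_dotProduct, dotProduct_sub,
      dotProduct_sub, e1, e2, dotProduct_comm (A⁻¹ *ᵥ y) y] at h0
    have : z ⬝ᵥ y = y ⬝ᵥ z := dotProduct_comm _ _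
    linarith [h0]
  have e4 : C *ᵥ x = y := by
    rw [hx, Matrix.mulVec_mulVec, Matrix.mul_nonsing_inv C hCd, Matrix.one_mulVec]
  have e5 : x ⬝ᵥ C *ᵥ x = y ⬝ᵥ C⁻¹ *ᵥ y := by
    rw [e4, dotProduct_comm, hx]
  have e6 : x ⬝ᵥ y = y ⬝ᵥ C⁻¹ *ᵥ y := by
    rw [hx, dotProduct_comm]
  have := key x
  have hx2 := h x
  linarith [hx2, this, e5.symm, e6]

private lemma infoMatrix_quad (f : Fin N → Fin p → ℝ) (w : Fin N → ℝ) (x : Fin p → ℝ) :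
    x ⬝ᵥ (infoMatrix f w *ᵥ x) = ∑ i, w i * (f i ⬝ᵥ x)^2 := by
  simp only [infoMatrix, Matrix.mulVec, dotProduct, Matrix.sum_apply, Matrix.smul_apply,
    vecMulVec_apply, Finset.sum_apply, Finset.sum_mul, Finset.mul_sum, smul_eq_mul]
  refine Eq.trans (Finset.sum_congr rfl fun k _ => Finset.sum_comm) ?_
  rw [Finset.sum_comm]
  refine Finset.sum_congr rfl fun i _ => ?_
  rw [pow_two, Finset.sum_mul_sum, Finset.mul_sum]
  refine Finset.sum_congr rfl fun k _ => ?_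
  rw [Finset.mul_sum]
  refine Finset.sum_congr rfl fun l _ => by ring

private lemma infoMatrix_posSemidef (f : Fin N → Fin p → ℝ) {w : Fin N → ℝ}
    (hw : ∀ i, 0 ≤ w i) : (infoMatrix f w).PosSemidef := by
  refine Matrix.PosSemidef.of_dotProduct_mulVec_nonneg ?_ ?_
  · show (infoMatrix f w)ᴴ = _
    ext i j
    simp only [infoMatrix, Matrix.conjTranspose_apply, Matrix.sum_apply, Matrix.smul_apply,
      vecMulVec_apply, smul_eq_mul, star_trivial]
    exact Finset.sum_congr rfl fun k _ => by ring
  · intro x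
    rw [star_trivial, infoMatrix_quad]
    exact Finset.sum_nonneg fun i _ => mul_nonneg (hw i) (sq_nonneg _)

private lemma infoMatrix_convex (f : Fin N → Fin p → ℝ) (w v : Fin N → ℝ) (t : ℝ) :
    infoMatrix f (fun i => (1 - t) * w i + t * v i)
      = (1 - t) • infoMatrix f w + t • infoMatrix f v := by
  simp only [infoMatrix, Finset.smul_sum, ← Finset.sum_add_distrib, add_smul, smul_smul]

private lemma convexity_ineq {A B : Matrix (Fin p) (Fin p) ℝ} (hA : A.PosDef) (hB : B.PosDef) :
    2 * B⁻¹.trace ≤ A⁻¹.trace + (B⁻¹ * A * B⁻¹).trace := by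
  set S := A⁻¹ - B⁻¹ with hS
  have hSH : Sᴴ = S := by
    rw [hS, Matrix.conjTranspose_sub, hA.inv.isHermitian.eq, hB.inv.isHermitian.eq]
  have hpsd := hA.posSemidef.conjTranspose_mul_mul_same S
  rw [hSH] at hpsd
  have h0 : 0 ≤ (S * A * S).trace := psd_trace_nonneg hpsd
  have e1 : A⁻¹ * A = 1 := Matrix.nonsing_inv_mul A hA.det_pos.ne'.isUnit
  have e2 : A * A⁻¹ = 1 := Matrix.mul_nonsing_inv A hA.det_pos.ne'.isUnit
  have e3 : A⁻¹ * (A * B⁻¹) = B⁻¹ := by rw [← Matrix.mul_assoc, e1, Matrix.one_mul]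
  have e4 : A⁻¹ * (A * A⁻¹) = A⁻¹ := by rw [e2, Matrix.mul_one]
  have e5 : B⁻¹ * (A * A⁻¹) = B⁻¹ := by rw [e2, Matrix.mul_one]
  have expand : S * A * S = A⁻¹ - B⁻¹ - B⁻¹ + B⁻¹ * A * B⁻¹ := by
    rw [hS]
    simp only [Matrix.sub_mul, Matrix.mul_sub, Matrix.mul_assoc, e3, e4, e5]
    abel
  rw [expand] at h0
  simp only [Matrix.trace_add, Matrix.trace_sub] at h0
  linarith

private lemma eps_lemma {L K : ℝ} (hK : 0 ≤ K)
    (main : ∀ t : ℝ, 0 < t → t < 1 → L ≤ t * ((1 - t)⁻¹ * K)) : L ≤ 0 := by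
  by_contra hneg
  push_neg at hneg
  set t0 : ℝ := L / (2 * (K + L)) with ht0def
  have hKL : 0 < K + L := by linarith
  have ht00 : 0 < t0 := by positivity
  have ht0half : t0 ≤ 1 / 2 := by
    rw [ht0def, div_le_div_iff₀ (by linarith) (by norm_num)]
    nlinarith
  have ht01 : t0 < 1 := by linarith
  have hmain := main t0 ht00 ht01
  have hinv2 : (1 - t0)⁻¹ ≤ 2 := by
    rw [inv_le_comm₀ (by linarith) (by norm_num)]
    linarith
  have hb1 : t0 * ((1 - t0)⁻¹ * K) ≤ t0 * (2 * K) := by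
    have : (1 - t0)⁻¹ * K ≤ 2 * K := mul_le_mul_of_nonneg_right hinv2 hK
    exact mul_le_mul_of_nonneg_left this ht00.le
  have hb2 : t0 * (2 * K) < L := by
    rw [ht0def, div_mul_eq_mul_div, div_lt_iff₀ (by positivity : (0:ℝ) < 2*(K+L))]
    nlinarith
  linarith

end AuxLemmas

/-- Theorem 4 (A-optimality equivalence): `w*` minimizes `w ↦ tr(M(w)⁻¹)` over all
probability vectors with positive definite information matrix if and only if
`tr(M(w*)⁻¹ M(w) M(w*)⁻¹) ≤ tr(M(w*)⁻¹)` for every probability vector `w`. -/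
theorem a_optimal_iff
    (p N : ℕ) (hp : 0 < p) (hN : 0 < N)
    (f : Fin N → Fin p → ℝ)
    (wstar : Fin N → ℝ) (hwstar : IsProbVec wstar)
    (hpos : (infoMatrix f wstar).PosDef) :
    (∀ w : Fin N → ℝ, IsProbVec w → (infoMatrix f w).PosDef →
        ((infoMatrix f wstar)⁻¹).trace ≤ ((infoMatrix f w)⁻¹).trace)
      ↔
    (∀ w : Fin N → ℝ, IsProbVec w →
        ((infoMatrix f wstar)⁻¹ * infoMatrix f w * (infoMatrix f wstar)⁻¹).trace ≤
          ((infoMatrix f wstar)⁻¹).trace) := by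
  set B := infoMatrix f wstar with hB
  set R := B⁻¹ with hR
  have hBd : IsUnit B.det := hpos.det_pos.ne'.isUnit
  have hBR : B * R = 1 := Matrix.mul_nonsing_inv B hBd
  have hRB : R * B = 1 := Matrix.nonsing_inv_mul B hBd
  have hRpd : R.PosDef := hpos.inv
  have hRH : Rᵀ = R := by simpa using hRpd.isHermitian.eq
  constructor
  · -- optimality → normal inequality
    intro hopt w hw
    set C := infoMatrix f w with hC
    have hCpsd : C.PosSemidef := infoMatrix_posSemidef f hw.1
    have hCH : Cᵀ = C := by simpa using hCpsd.isHermitian.eq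
    set D := C - B with hD
    have hDH : Dᵀ = D := by
      rw [hD, Matrix.transpose_sub, hCH]
      congr 1
      simpa using hpos.isHermitian.eq
    set X := D * R with hX
    have hXT : Xᵀ = R * D := by rw [hX, Matrix.transpose_mul, hDH, hRH]
    set K := ∑ j, (fun k => X k j) ⬝ᵥ (R *ᵥ fun k => X k j) with hKdef
    have hK : 0 ≤ K := by
      refine Finset.sum_nonneg fun j _ => ?_
      simpa using hRpd.posSemidef.dotProduct_mulVec_nonneg (fun k => X k j)
    set L := (R * (D * R)).trace with hL
    -- main estimate
    have main : ∀ t : ℝ, 0 < t → t < 1 → L ≤ t * ((1 - t)⁻¹ * K) := by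
      intro t ht0 ht1
      have h1t : 0 < 1 - t := by linarith
      set wt : Fin N → ℝ := fun i => (1 - t) * wstar i + t * w i with hwt
      have hwtprob : IsProbVec wt := by
        constructor
        · intro i
          have := hwstar.1 i
          have := hw.1 i
          positivity
        · simp only [hwt, Finset.sum_add_distrib, ← Finset.mul_sum, hwstar.2, hw.2]
          ring
      set At := (1 - t) • B + t • C with hAt
      have hMt : infoMatrix f wt = At := infoMatrix_convex f wstar w t
      have hAtquad : ∀ x : Fin p → ℝ,
          x ⬝ᵥ At *ᵥ x = (1 - t) * (x ⬝ᵥ B *ᵥ x) + t * (x ⬝ᵥ C *ᵥ x) := by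
        intro x
        rw [hAt, Matrix.add_mulVec, Matrix.smul_mulVec, Matrix.smul_mulVec,
          dotProduct_add, dotProduct_smul, dotProduct_smul, smul_eq_mul, smul_eq_mul]
      have hAtpd : At.PosDef := by
        refine Matrix.PosDef.of_dotProduct_mulVec_pos ?_ ?_
        · show Atᴴ = At
          rw [hAt, Matrix.conjTranspose_add, Matrix.conjTranspose_smul,
            Matrix.conjTranspose_smul, hpos.isHermitian.eq, hCpsd.isHermitian.eq]
          simp
        · intro x hx
          rw [star_trivial, hAtquad]
          have hb := hpos.dotProduct_mulVec_pos hx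
          rw [star_trivial] at hb
          have hc := hCpsd.dotProduct_mulVec_nonneg x
          rw [star_trivial] at hc
          nlinarith
      set E := At⁻¹ with hE
      have hAtd : IsUnit At.det := hAtpd.det_pos.ne'.isUnit
      have hAtE : At * E = 1 := Matrix.mul_nonsing_inv At hAtd
      have hEAt : E * At = 1 := Matrix.nonsing_inv_mul At hAtd
      have hAtBD : At = B + t • D := by
        rw [hAt, hD, smul_sub, sub_smul, one_smul]
        abel
      -- first-order identities
      have hE1 : E = R - t • (R * (D * E)) := by
        have h0 : R * (At * E) = R := by rw [hAtE, Matrix.mul_one]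
        rw [hAtBD, Matrix.add_mul, Matrix.mul_add, ← Matrix.mul_assoc, hRB,
          Matrix.one_mul, Matrix.smul_mul, Matrix.mul_smul] at h0
        exact eq_sub_of_add_eq h0
      have hE2 : E = R - t • (E * (D * R)) := by
        have h0 : (E * At) * R = R := by rw [hEAt, Matrix.one_mul]
        rw [hAtBD, Matrix.mul_add, Matrix.add_mul, Matrix.mul_assoc E B R, hBR,
          Matrix.mul_one, Matrix.mul_smul, Matrix.smul_mul, Matrix.mul_assoc] at h0
        exact eq_sub_of_add_eq h0
      -- traces
      have tr1 : E.trace = R.trace - t * (R * (D * E)).trace := by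
        conv_lhs => rw [hE1]
        rw [Matrix.trace_sub, Matrix.trace_smul, smul_eq_mul]
      set T := (R * (D * (E * (D * R)))).trace with hT
      have tr2 : (R * (D * E)).trace = L - t * T := by
        conv_lhs => rw [hE2]
        rw [Matrix.mul_sub, Matrix.mul_smul, Matrix.mul_sub, Matrix.mul_smul,
          Matrix.trace_sub, Matrix.trace_smul, smul_eq_mul, hL, hT]
      have hopt' : R.trace ≤ E.trace := by
        have := hopt wt hwtprob (hMt ▸ hAtpd)
        rwa [hMt] at this
      have step1 : L ≤ t * T := by
        rw [tr1, tr2] at hopt'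
        nlinarith
      -- bound T
      have hsB : ((1 - t) • B).PosDef := by
        refine Matrix.PosDef.of_dotProduct_mulVec_pos ?_ ?_
        · show ((1 - t) • B)ᴴ = (1 - t) • B
          rw [Matrix.conjTranspose_smul, hpos.isHermitian.eq]
          simp
        · intro x hx
          rw [star_trivial, Matrix.smul_mulVec, dotProduct_smul, smul_eq_mul]
          have hb := hpos.dotProduct_mulVec_pos hx
          rw [star_trivial] at hb
          positivity
      have hsle : ∀ x : Fin p → ℝ, x ⬝ᵥ ((1 - t) • B) *ᵥ x ≤ x ⬝ᵥ At *ᵥ x := by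
        intro x
        rw [hAtquad, Matrix.smul_mulVec, dotProduct_smul, smul_eq_mul]
        have hc := hCpsd.dotProduct_mulVec_nonneg x
        rw [star_trivial] at hc
        nlinarith
      have hinv : ((1 - t) • B)⁻¹ = (1 - t)⁻¹ • R := by
        refine Matrix.inv_eq_right_inv ?_
        rw [Matrix.smul_mul, Matrix.mul_smul, smul_smul, mul_inv_cancel₀ h1t.ne', hBR, one_smul]
      have colbound : ∀ y : Fin p → ℝ,
          y ⬝ᵥ E *ᵥ y ≤ (1 - t)⁻¹ * (y ⬝ᵥ R *ᵥ y) := by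
        intro y
        have := quad_inv_mono hsB hAtpd hsle y
        rwa [hinv, Matrix.smul_mulVec, dotProduct_smul, smul_eq_mul, ← hE] at this
      have hTX : T = (Xᵀ * E * X).trace := by
        rw [hXT, hX, hT]
        congr 1
        simp only [Matrix.mul_assoc]
      have step2 : T ≤ (1 - t)⁻¹ * K := by
        rw [hTX, trace_conj_sum, hKdef, Finset.mul_sum]
        exact Finset.sum_le_sum fun j _ => colbound _
      calc L ≤ t * T := step1
        _ ≤ t * ((1 - t)⁻¹ * K) := by
            exact mul_le_mul_of_nonneg_left step2 ht0.le
    -- L ≤ 0 by taking t → 0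
    have hL0 : L ≤ 0 := eps_lemma hK main
    -- unfold L
    have hfinal : L = (R * C * R).trace - R.trace := by
      rw [hL, hD, Matrix.sub_mul, Matrix.mul_sub, Matrix.trace_sub, ← Matrix.mul_assoc,
        ← Matrix.mul_assoc, hRB, Matrix.one_mul]
    rw [hfinal] at hL0
    linarith
  · -- normal inequality → optimality
    intro hcond w hw hwpd
    have h1 := convexity_ineq hwpd hpos
    have h2 := hcond w hw
    linarith
end

section
/- Let f₁,…,f_N ∈ ℝ^p and let w* be a D-optimal probability vector on {1,…,N}, i.e., w* minimizes −log det(Σᵢ wᵢ fᵢ fᵢᵀ) over all probability vectors, with M(w*) = Σᵢ w*ᵢ fᵢ fᵢᵀ positive definite. Then for every index j ∈ {1,…,N}, f_jᵀ M(w*)⁻¹ f_j ≤ p. -/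
open Matrix BigOperators

set_option maxHeartbeats 1000000 in
/-- If `w*` is D-optimal (with positive definite information matrix), then
`f jᵀ M(w*)⁻¹ f j ≤ p` for every index `j`. -/
theorem d_optimal_pointwise_bound
    (p N : ℕ) (hp : 0 < p) (hN : 0 < N)
    (f : Fin N → Fin p → ℝ)
    (wstar : Fin N → ℝ) (hwstar : IsProbVec wstar)
    (hpos : (infoMatrix f wstar).PosDef)
    (hopt : ∀ w : Fin N → ℝ, IsProbVec w →
      -Real.log (infoMatrix f wstar).det ≤ -Real.log (infoMatrix f w).det) :
    ∀ j : Fin N, f j ⬝ᵥ ((infoMatrix f wstar)⁻¹ *ᵥ f j) ≤ (p : ℝ) := by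
  intro j
  by_contra hcon
  push_neg at hcon
  set M := infoMatrix f wstar with hM
  set a : ℝ := f j ⬝ᵥ (M⁻¹ *ᵥ f j) with ha
  have hp1 : (1:ℝ) ≤ p := by exact_mod_cast hp
  have ha1 : (1:ℝ) < a := lt_of_le_of_lt hp1 hcon
  set c : ℝ := ((p:ℝ) - 1) * (a - 1) with hc
  have hc0 : 0 ≤ c := mul_nonneg (by linarith) (by linarith)
  set d : ℝ := a - p with hd
  have hd0 : 0 < d := by simp only [hd]; linarith
  set t : ℝ := d / (c + d + 1) with ht
  have ht0 : 0 < t := div_pos hd0 (by linarith)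
  have ht1 : t < 1 := (div_lt_one (by linarith)).2 (by linarith)
  have hone : (0:ℝ) < 1 - t := by linarith
  have hte : t * (c + d + 1) = d := div_mul_cancel₀ d (by linarith)
  -- the perturbed weights
  set w : Fin N → ℝ := fun i => (1 - t) * wstar i + t * (if i = j then 1 else 0) with hw
  have hwprob : IsProbVec w := by
    constructor
    · intro i
      have h1 : 0 ≤ (1 - t) * wstar i := mul_nonneg (by linarith) (hwstar.1 i)
      have h2 : 0 ≤ t * (if i = j then (1:ℝ) else 0) := by
        apply mul_nonneg ht0.le; split <;> norm_num
      simpa [hw] using add_nonneg h1 h2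
    · simp [hw, Finset.sum_add_distrib, ← Finset.mul_sum, hwstar.2, mul_ite,
        Finset.sum_ite_eq']
  -- the perturbed information matrix
  have hinfo : infoMatrix f w =
      (1 - t) • M + t • vecMulVec (f j) (f j) := by
    simp only [hM, infoMatrix, hw, add_smul, Finset.sum_add_distrib, smul_smul,
      Finset.smul_sum, mul_ite, mul_one, mul_zero, ite_smul, zero_smul,
      Finset.sum_ite_eq', Finset.mem_univ, if_true]
  -- determinant facts
  have hdM : 0 < M.det := hpos.det_pos
  have hMunit : IsUnit M.det := isUnit_iff_ne_zero.2 (ne_of_gt hdM)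
  have hAunit : IsUnit ((1 - t) • M).det := by
    rw [det_smul]
    exact isUnit_iff_ne_zero.2 (by positivity)
  have hinv : ((1 - t) • M)⁻¹ = (1 - t)⁻¹ • M⁻¹ := by
    have : Invertible (1 - t) := invertibleOfNonzero (ne_of_gt hone)
    rw [Matrix.inv_smul _ _ hMunit, invOf_eq_inv]
  have hdot : f j ⬝ᵥ (((1 - t)⁻¹ • M⁻¹) *ᵥ (t • f j)) = (1 - t)⁻¹ * (t * a) := by
    rw [Matrix.smul_mulVec, Matrix.mulVec_smul]
    simp only [dotProduct_smul, smul_eq_mul, ← ha]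
    try ring
  have h1x : (1 + replicateRow Unit (f j) * ((1 - t) • M)⁻¹ * replicateCol Unit (t • f j)).det
      = 1 + (1 - t)⁻¹ * (t * a) := by
    rw [Matrix.mul_assoc, hinv, ← Matrix.replicateCol_mulVec, det_unique]
    simp only [Matrix.add_apply, Matrix.one_apply_eq, replicateRow_mul_replicateCol_apply, hdot]
  have hdet : (infoMatrix f w).det
      = (1 - t) ^ p * M.det * (1 + (1 - t)⁻¹ * (t * a)) := by
    have hvmv : t • vecMulVec (f j) (f j) = vecMulVec (t • f j) (f j) := by
      ext i k
      simp only [vecMulVec, Matrix.smul_apply, Matrix.of_apply, Pi.smul_apply,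
        smul_eq_mul]
      ring
    rw [hinfo, hvmv, vecMulVec_eq Unit, Matrix.det_add_replicateCol_mul_replicateRow hAunit, h1x,
      det_smul]
    simp [Fintype.card_fin]
    try ring
  have hX : 0 < 1 + (1 - t)⁻¹ * (t * a) := by
    have h0 : 0 < (1 - t)⁻¹ * (t * a) := by positivity
    linarith
  have hdw : 0 < (infoMatrix f w).det := by
    rw [hdet]; positivity
  -- optimality gives (infoMatrix f w).det ≤ M.det
  have hle : (infoMatrix f w).det ≤ M.det := by
    have h := hopt w hwprob
    have hlog : Real.log (infoMatrix f w).det ≤ Real.log M.det := by linarith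
    exact (Real.log_le_log_iff hdw hdM).1 hlog
  -- hence (1-t)^p * (1 + (1-t)⁻¹ t a) ≤ 1
  have key : (1 - t) ^ p * (1 + (1 - t)⁻¹ * (t * a)) ≤ 1 := by
    rw [hdet] at hle
    have hrw : (1 - t) ^ p * M.det * (1 + (1 - t)⁻¹ * (t * a))
        = ((1 - t) ^ p * (1 + (1 - t)⁻¹ * (t * a))) * M.det := by ring
    rw [hrw] at hle
    have := (mul_le_mul_iff_of_pos_right hdM).1 (by linarith : ((1 - t) ^ p * (1 + (1 - t)⁻¹ * (t * a))) * M.det ≤ 1 * M.det)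
    linarith
  -- rewrite (1-t)^p = (1-t)^(p-1) * (1-t)
  have hps : p - 1 + 1 = p := Nat.succ_pred_eq_of_pos hp
  have key2 : (1 - t) ^ (p - 1) * (1 - t + t * a) ≤ 1 := by
    have h1 : (1 - t) ^ p = (1 - t) ^ (p - 1) * (1 - t) := by
      rw [← pow_succ, hps]
    have h2 : (1 - t) * (1 + (1 - t)⁻¹ * (t * a)) = 1 - t + t * a := by
      field_simp
    calc (1 - t) ^ (p - 1) * (1 - t + t * a)
        = (1 - t) ^ p * (1 + (1 - t)⁻¹ * (t * a)) := by rw [h1, ← h2]; ring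
      _ ≤ 1 := key
  -- Bernoulli: 1 - (p-1) t ≤ (1-t)^(p-1)
  have hbern : 1 - ((p:ℝ) - 1) * t ≤ (1 - t) ^ (p - 1) := by
    have hb := one_add_mul_le_pow (a := -t) (by linarith) (p - 1)
    have hcast : ((p - 1 : ℕ) : ℝ) = (p:ℝ) - 1 := Nat.cast_pred hp
    rw [hcast, show (1:ℝ) + -t = 1 - t by ring] at hb
    linarith
  have hposfac : 0 < 1 - t + t * a := by nlinarith [mul_pos ht0 (by linarith : (0:ℝ) < a - 1)]
  have key3 : (1 - ((p:ℝ) - 1) * t) * (1 - t + t * a) ≤ 1 :=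
    le_trans (mul_le_mul_of_nonneg_right hbern hposfac.le) key2
  -- expand: t * d ≤ c * t^2, then contradiction
  have hexp : (1 - ((p:ℝ) - 1) * t) * (1 - t + t * a) = 1 + t * d - c * t ^ 2 := by
    rw [hc, hd]; ring
  have h4 : t * d ≤ c * t ^ 2 := by
    rw [hexp] at key3; linarith
  have h5 : d ≤ c * t := by
    have hq : c * t ^ 2 = t * (c * t) := by ring
    exact le_of_mul_le_mul_left (by linarith [h4, hq]) ht0
  have h6 : d * (c + d + 1) ≤ c * t * (c + d + 1) :=
    mul_le_mul_of_nonneg_right h5 (by linarith)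
  have h7 : c * t * (c + d + 1) = c * d := by
    have hq2 : c * t * (c + d + 1) = c * (t * (c + d + 1)) := by ring
    rw [hq2, hte]
  nlinarith [h6, h7, hd0, hc0, mul_pos hd0 hd0]
end

section
/- Let f₁,…,f_N ∈ ℝ^p with Σᵢ fᵢ fᵢᵀ positive definite, and let (w^{(n)})_{n≥0} be a sequence of probability vectors on {1,…,N} with strictly positive entries generated by the multiplicative D-optimality update w^{(n)}ᵢ = w^{(n−1)}ᵢ · fᵢᵀ M(w^{(n−1)})⁻¹ fᵢ / p, with each M(w^{(n)}) = Σᵢ w^{(n)}ᵢ fᵢ fᵢᵀ positive definite. Then the real sequence ( log det M(w^{(n)}) )_{n≥0} is nondecreasing, bounded above by log det(Σᵢ fᵢ fᵢᵀ), and hence converges. -/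
open Matrix BigOperators Filter

namespace DOptAux

variable {p N : ℕ}

lemma mulVec_vecMulVec (u v x : Fin p → ℝ) :
    vecMulVec u v *ᵥ x = (v ⬝ᵥ x) • u := by
  ext j
  simp [vecMulVec_apply, mulVec, dotProduct, Finset.sum_mul, Finset.mul_sum]
  exact Finset.sum_congr rfl fun k _ => by ring

lemma sum_mulVec' {ι : Type*} (s : Finset ι) (M : ι → Matrix (Fin p) (Fin p) ℝ)
    (z : Fin p → ℝ) : (∑ i ∈ s, M i) *ᵥ z = ∑ i ∈ s, M i *ᵥ z := by
  classical
  induction s using Finset.induction_on with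
  | empty => simp [Matrix.zero_mulVec]
  | insert _ _ hx ih => rw [Finset.sum_insert hx, Finset.sum_insert hx, Matrix.add_mulVec, ih]

lemma dotProduct_finset_sum {ι : Type*} (y : Fin p → ℝ) (s : Finset ι)
    (g : ι → Fin p → ℝ) : y ⬝ᵥ (∑ i ∈ s, g i) = ∑ i ∈ s, y ⬝ᵥ g i := by
  simp only [dotProduct, Finset.sum_apply, Finset.mul_sum]
  exact Finset.sum_comm

lemma dotProduct_sum_smul_vecMulVec (c : Fin N → ℝ) (f : Fin N → Fin p → ℝ)
    (y z : Fin p → ℝ) :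
    y ⬝ᵥ ((∑ i, c i • vecMulVec (f i) (f i)) *ᵥ z)
      = ∑ i, c i * (f i ⬝ᵥ y) * (f i ⬝ᵥ z) := by
  rw [sum_mulVec', dotProduct_finset_sum]
  refine Finset.sum_congr rfl fun i _ => ?_
  rw [smul_mulVec, mulVec_vecMulVec, dotProduct_smul, dotProduct_smul]
  rw [smul_eq_mul, smul_eq_mul, dotProduct_comm y (f i)]
  ring

lemma posSemidef_smul_vecMulVec {c : ℝ} (hc : 0 ≤ c) (v : Fin p → ℝ) :
    (c • vecMulVec v v).PosSemidef := by
  refine PosSemidef.of_dotProduct_mulVec_nonneg ?_ ?_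
  · ext i j
    simp [conjTranspose_apply, vecMulVec_apply, mul_comm]
  · intro x
    rw [star_trivial, smul_mulVec, mulVec_vecMulVec, dotProduct_smul, dotProduct_smul]
    rw [smul_eq_mul, smul_eq_mul, dotProduct_comm x v]
    exact mul_nonneg hc (mul_self_nonneg _)

lemma posSemidef_sum {ι : Type*} (s : Finset ι) (A : ι → Matrix (Fin p) (Fin p) ℝ)
    (h : ∀ i ∈ s, (A i).PosSemidef) : (∑ i ∈ s, A i).PosSemidef :=
  Finset.sum_induction A _ (fun _ _ ha hb => ha.add hb) Matrix.PosSemidef.zero h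

lemma det_nonneg' {A : Matrix (Fin p) (Fin p) ℝ} (hA : A.PosSemidef) : 0 ≤ A.det := by
  rw [hA.isHermitian.det_eq_prod_eigenvalues]
  exact Finset.prod_nonneg fun i _ => by
    simpa using hA.eigenvalues_nonneg i

lemma trace_eq_sum_eigenvalues {A : Matrix (Fin p) (Fin p) ℝ} (hA : A.IsHermitian) :
    A.trace = ∑ i, hA.eigenvalues i := by
  conv_lhs => rw [hA.spectral_theorem, Unitary.conjStarAlgAut_apply]
  rw [Matrix.trace_mul_comm, ← Matrix.mul_assoc]
  have hU : (star (hA.eigenvectorUnitary : Matrix (Fin p) (Fin p) ℝ)) *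
      (hA.eigenvectorUnitary : Matrix (Fin p) (Fin p) ℝ) = 1 :=
    (Unitary.mem_iff.mp (hA.eigenvectorUnitary).2).1
  rw [hU, one_mul, Matrix.trace_diagonal]
  simp

lemma one_le_det_one_add {A : Matrix (Fin p) (Fin p) ℝ} (hA : A.PosSemidef) :
    1 ≤ (1 + A).det := by
  have hH := hA.isHermitian
  set U : Matrix (Fin p) (Fin p) ℝ := (hH.eigenvectorUnitary : Matrix (Fin p) (Fin p) ℝ) with hUdef
  set D : Matrix (Fin p) (Fin p) ℝ := diagonal (RCLike.ofReal ∘ hH.eigenvalues) with hDdef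
  have hUU : U * star U = 1 := (Unitary.mem_iff.mp (hH.eigenvectorUnitary).2).2
  have key : 1 + A = U * (1 + D) * star U := by
    rw [Matrix.mul_add, Matrix.add_mul, Matrix.mul_one, hUU]
    congr 1
    rw [hH.spectral_theorem, Unitary.conjStarAlgAut_apply]
  have hdetU : U.det * (star U).det = 1 := by
    rw [← Matrix.det_mul, hUU, Matrix.det_one]
  have h1 : 1 ≤ (1 + D).det := by
    have hd : (1 + D).det = ∏ i, (1 + hH.eigenvalues i) := by
      rw [hDdef, ← Matrix.diagonal_one, Matrix.diagonal_add, Matrix.det_diagonal]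
      simp
    rw [hd]
    calc (1:ℝ) = ∏ _i : Fin p, (1:ℝ) := by simp
      _ ≤ ∏ i, (1 + hH.eigenvalues i) := by
          refine Finset.prod_le_prod (fun i _ => zero_le_one) (fun i _ => ?_)
          have := hA.eigenvalues_nonneg i
          linarith
  rw [key, Matrix.det_mul, Matrix.det_mul]
  have e : U.det * (1 + D).det * (star U).det = (1 + D).det * (U.det * (star U).det) := by ring
  rw [e, hdetU, mul_one]
  exact h1

open scoped MatrixOrder in
lemma det_le_det_of_sub {A B : Matrix (Fin p) (Fin p) ℝ}
    (hA : A.PosSemidef) (hBA : (B - A).PosSemidef) : A.det ≤ B.det := by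
  have hB : B.PosSemidef := by
    have := hA.add hBA
    simpa using this
  rcases (det_nonneg' hA).eq_or_lt with h0 | hdet
  · rw [← h0]; exact det_nonneg' hB
  · have hunit : IsUnit A.det := isUnit_iff_ne_zero.2 hdet.ne'
    have hInv : A⁻¹.PosSemidef := hA.inv
    set R := CFC.sqrt A⁻¹ with hRdef
    have hRR : R * R = A⁻¹ := CFC.sqrt_mul_sqrt_self _ hInv.nonneg
    have hRH : Rᴴ = R := (CFC.sqrt_nonneg _).posSemidef.isHermitian
    have hT : (R * (B - A) * R).PosSemidef := by
      have := (hBA.conjTranspose_mul_mul_same (B := R))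
      rwa [hRH] at this
    have hAB : A⁻¹ * B = 1 + A⁻¹ * (B - A) := by
      rw [Matrix.mul_sub, Matrix.nonsing_inv_mul _ hunit]
      rw [add_comm, sub_add_cancel]
    have hdet2 : B.det = A.det * (A⁻¹ * B).det := by
      rw [← Matrix.det_mul, Matrix.mul_nonsing_inv_cancel_left _ _ hunit]
    have hone : 1 ≤ (A⁻¹ * B).det := by
      rw [hAB, ← hRR, Matrix.mul_assoc, Matrix.det_one_add_mul_comm]
      exact one_le_det_one_add hT
    calc A.det = A.det * 1 := (mul_one _).symm
      _ ≤ A.det * (A⁻¹ * B).det := by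
          exact mul_le_mul_of_nonneg_left hone hdet.le
      _ = B.det := hdet2.symm

lemma det_le_trace_div_pow {T : Matrix (Fin p) (Fin p) ℝ} (hT : T.PosSemidef)
    (hp : 0 < p) : T.det ≤ (T.trace / p) ^ p := by
  have hH := hT.isHermitian
  have hl : ∀ i, 0 ≤ hH.eigenvalues i := fun i => hT.eigenvalues_nonneg i
  have hdet : T.det = ∏ i, hH.eigenvalues i := by
    rw [hH.det_eq_prod_eigenvalues]; simp
  have htr : T.trace = ∑ i, hH.eigenvalues i := trace_eq_sum_eigenvalues hH
  rw [hdet, htr]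
  set lam := hH.eigenvalues
  have hpne : (p:ℝ) ≠ 0 := Nat.cast_ne_zero.2 hp.ne'
  have hAMGM : (∏ i, lam i) ^ (1/(p:ℝ)) ≤ (∑ i, lam i) / p := by
    have h := Real.geom_mean_le_arith_mean_weighted Finset.univ
      (fun _ => 1/(p:ℝ)) lam (fun i _ => by positivity)
      (by simp [Finset.card_fin]; field_simp) (fun i _ => hl i)
    calc (∏ i, lam i) ^ (1/(p:ℝ)) = ∏ i, lam i ^ (1/(p:ℝ)) := by
          rw [← Real.finset_prod_rpow _ _ (fun i _ => hl i)]
      _ ≤ ∑ i, 1/(p:ℝ) * lam i := h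
      _ = (∑ i, lam i) / p := by
          rw [← Finset.mul_sum]
          ring
  have hprodnn : (0:ℝ) ≤ ∏ i, lam i := Finset.prod_nonneg fun i _ => hl i
  have hb : (0:ℝ) ≤ (∑ i, lam i) / p := le_trans (Real.rpow_nonneg hprodnn _) hAMGM
  calc (∏ i, lam i) = ((∏ i, lam i) ^ (1/(p:ℝ))) ^ (p:ℝ) := by
        rw [← Real.rpow_mul hprodnn, one_div, inv_mul_cancel₀ hpne, Real.rpow_one]
    _ ≤ ((∑ i, lam i) / p) ^ (p:ℝ) := by
        exact Real.rpow_le_rpow (Real.rpow_nonneg hprodnn _) hAMGM (Nat.cast_nonneg p)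
    _ = ((∑ i, lam i) / p) ^ p := Real.rpow_natCast _ p

lemma trace_vecMulVec_mul (u v : Fin p → ℝ) (B : Matrix (Fin p) (Fin p) ℝ) :
    (vecMulVec u v * B).trace = v ⬝ᵥ (B *ᵥ u) := by
  simp only [Matrix.trace, Matrix.diag, Matrix.mul_apply, vecMulVec_apply, dotProduct, mulVec]
  rw [Finset.sum_comm]
  exact Finset.sum_congr rfl fun k _ => by rw [Finset.mul_sum]; exact Finset.sum_congr rfl fun j _ => by ring

open scoped MatrixOrder in
lemma det_step (hp : 0 < p) (f : Fin N → Fin p → ℝ)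
    (w w' : Fin N → ℝ) (hw : ∀ i, 0 < w i) (hw' : ∀ i, 0 < w' i)
    (hsum : ∑ i, w i = 1)
    (hM : (infoMatrix f w).PosDef) (hP : (infoMatrix f w').PosDef)
    (hupd : ∀ i, w' i = w i * (f i ⬝ᵥ ((infoMatrix f w)⁻¹ *ᵥ f i)) / p) :
    (infoMatrix f w).det ≤ (infoMatrix f w').det := by
  classical
  set M := infoMatrix f w with hMdef
  set P := infoMatrix f w' with hPdef
  have hppos : (0:ℝ) < p := Nat.cast_pos.2 hp
  set d : Fin N → ℝ := fun i => f i ⬝ᵥ (M⁻¹ *ᵥ f i) with hddef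
  have hupd' : ∀ i, w' i = w i * d i / p := fun i => hupd i
  have hd : ∀ i, 0 < d i := by
    intro i
    have h := hw' i
    rw [hupd' i] at h
    have h2 : 0 < w i * d i := by
      rcases div_pos_iff.mp h with ⟨h3, _⟩ | ⟨_, h4⟩
      · exact h3
      · linarith
    rcases mul_pos_iff.mp h2 with ⟨_, h5⟩ | ⟨h5, _⟩
    · exact h5
    · linarith [hw i]
  set Q : Matrix (Fin p) (Fin p) ℝ := ∑ i, (w i * p / d i) • vecMulVec (f i) (f i) with hQdef
  have hQpsd : Q.PosSemidef := by
    refine posSemidef_sum _ _ fun i _ => posSemidef_smul_vecMulVec ?_ (f i)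
    exact le_of_lt (div_pos (mul_pos (hw i) hppos) (hd i))
  have hMunit : IsUnit M.det := isUnit_iff_ne_zero.2 hM.det_pos.ne'
  have htrQ : (Q * M⁻¹).trace = p := by
    rw [hQdef, Finset.sum_mul, Matrix.trace_sum]
    have e1 : ∀ i ∈ Finset.univ, ((w i * p / d i) • vecMulVec (f i) (f i) * M⁻¹).trace
        = w i * p := by
      intro i _
      rw [smul_mul_assoc, Matrix.trace_smul, trace_vecMulVec_mul]
      have : f i ⬝ᵥ (M⁻¹ *ᵥ f i) = d i := rfl
      rw [this, smul_eq_mul, div_mul_eq_mul_div, mul_div_assoc, div_self (hd i).ne', mul_one]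
    rw [Finset.sum_congr rfl e1, ← Finset.sum_mul, hsum, one_mul]
  -- Step 1 : det Q ≤ det M
  have hQM : Q.det ≤ M.det := by
    have hInv : M⁻¹.PosSemidef := hM.posSemidef.inv
    set R := CFC.sqrt M⁻¹ with hRdef
    have hRR : R * R = M⁻¹ := CFC.sqrt_mul_sqrt_self _ hInv.nonneg
    have hRH : Rᴴ = R := (CFC.sqrt_nonneg _).posSemidef.isHermitian
    have hS : (R * Q * R).PosSemidef := by
      have := hQpsd.conjTranspose_mul_mul_same (B := R)
      rwa [hRH] at this
    have hdetS : (R * Q * R).det = Q.det * M⁻¹.det := by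
      rw [Matrix.det_mul, Matrix.det_mul,
        show R.det * Q.det * R.det = Q.det * (R.det * R.det) from by ring,
        ← Matrix.det_mul, hRR]
    have htrS : (R * Q * R).trace = p := by
      rw [Matrix.trace_mul_comm (R * Q) R, ← Matrix.mul_assoc, hRR,
        Matrix.trace_mul_comm, htrQ]
    have hSle : (R * Q * R).det ≤ 1 := by
      have h := det_le_trace_div_pow hS hp
      rw [htrS] at h
      simpa [div_self hppos.ne'] using h
    rw [hdetS] at hSle
    have hMinvdet : M⁻¹.det = M.det⁻¹ := by
      rw [Matrix.det_nonsing_inv, Ring.inverse_eq_inv']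
    rw [hMinvdet] at hSle
    have hMd := hM.det_pos
    calc Q.det = Q.det * M.det⁻¹ * M.det := by field_simp
      _ ≤ 1 * M.det := mul_le_mul_of_nonneg_right hSle hMd.le
      _ = M.det := one_mul _
  -- Step 2 : Schur complement / Cauchy–Schwarz step
  have hPunit : IsUnit P.det := isUnit_iff_ne_zero.2 hP.det_pos.ne'
  haveI : Invertible P := P.invertibleOfIsUnitDet hPunit
  have hMH : Mᴴ = M := hM.isHermitian
  have hX : (Matrix.fromBlocks P M Mᴴ Q).PosSemidef := by
    refine PosSemidef.of_dotProduct_mulVec_nonneg ?_ ?_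
    · rw [Matrix.isHermitian_fromBlocks_iff]
      refine ⟨hP.isHermitian, ?_, ?_, hQpsd.isHermitian⟩
      · rw [hMH]
      · rw [Matrix.conjTranspose_conjTranspose]
    · intro x
      rw [star_trivial, ← Sum.elim_comp_inl_inr x, Matrix.fromBlocks_mulVec,
        sumElim_dotProduct_sumElim, dotProduct_add, dotProduct_add, hMH]
      simp only [Sum.elim_comp_inl, Sum.elim_comp_inr]
      set a : Fin p → ℝ := x ∘ Sum.inl
      set b : Fin p → ℝ := x ∘ Sum.inr
      rw [hPdef, hMdef, hQdef]
      simp only [infoMatrix]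
      rw [dotProduct_sum_smul_vecMulVec, dotProduct_sum_smul_vecMulVec,
        dotProduct_sum_smul_vecMulVec, dotProduct_sum_smul_vecMulVec,
        ← Finset.sum_add_distrib, ← Finset.sum_add_distrib, ← Finset.sum_add_distrib]
      refine Finset.sum_nonneg fun i _ => ?_
      rw [hupd' i]
      have heq : w i * d i / p * (f i ⬝ᵥ a) * (f i ⬝ᵥ a) + w i * (f i ⬝ᵥ a) * (f i ⬝ᵥ b)
            + (w i * (f i ⬝ᵥ b) * (f i ⬝ᵥ a) + w i * p / d i * (f i ⬝ᵥ b) * (f i ⬝ᵥ b))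
          = w i / (d i * p) * (d i * (f i ⬝ᵥ a) + p * (f i ⬝ᵥ b))^2 := by
        have hdne : d i ≠ 0 := (hd i).ne'
        have hpne : (p:ℝ) ≠ 0 := hppos.ne'
        field_simp
      rw [heq]
      exact mul_nonneg (le_of_lt (div_pos (hw i) (mul_pos (hd i) hppos))) (sq_nonneg _)
  have hSchur : (Q - Mᴴ * P⁻¹ * M).PosSemidef :=
    (Matrix.PosDef.fromBlocks₁₁ M Q hP).mp hX
  have hC : (Mᴴ * P⁻¹ * M).PosSemidef :=
    (hP.posSemidef.inv).conjTranspose_mul_mul_same (B := M)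
  have hdetC : (Mᴴ * P⁻¹ * M).det = M.det * M.det * P.det⁻¹ := by
    rw [Matrix.det_mul, Matrix.det_mul, Matrix.det_conjTranspose,
      Matrix.det_nonsing_inv, Ring.inverse_eq_inv']
    simp only [star_trivial]
    ring
  have hle : M.det * M.det * P.det⁻¹ ≤ M.det := by
    rw [← hdetC]
    exact le_trans (det_le_det_of_sub hC hSchur) hQM
  have hPd := hP.det_pos
  have hMd := hM.det_pos
  have h2 : M.det * M.det ≤ M.det * P.det := by
    have := mul_le_mul_of_nonneg_right hle hPd.le
    calc M.det * M.det = M.det * M.det * P.det⁻¹ * P.det := by field_simp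
      _ ≤ M.det * P.det := this
  exact le_of_mul_le_mul_left h2 hMd

end DOptAux

/-- Along a sequence of strictly positive probability vectors generated by the
multiplicative D-optimality update, the sequence `log det M(w⁽ⁿ⁾)` is nondecreasing,
bounded above by `log det (∑ i, f i (f i)ᵀ)`, and hence converges. -/
theorem logdet_sequence_monotone_bounded_converges
    (p N : ℕ) (hp : 0 < p) (hN : 0 < N)
    (f : Fin N → Fin p → ℝ)
    (htot : (∑ i, vecMulVec (f i) (f i)).PosDef)
    (w : ℕ → Fin N → ℝ)
    (hprob : ∀ n, IsProbVec (w n))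
    (hwpos : ∀ n i, 0 < w n i)
    (hposdef : ∀ n, (infoMatrix f (w n)).PosDef)
    (hupdate : ∀ n i,
      w (n + 1) i = w n i * (f i ⬝ᵥ ((infoMatrix f (w n))⁻¹ *ᵥ f i)) / p) :
    Monotone (fun n => Real.log (infoMatrix f (w n)).det) ∧
      (∀ n, Real.log (infoMatrix f (w n)).det ≤
        Real.log (∑ i, vecMulVec (f i) (f i)).det) ∧
      ∃ L : ℝ, Tendsto (fun n => Real.log (infoMatrix f (w n)).det) atTop (nhds L) := by
  have hmono : Monotone (fun n => Real.log (infoMatrix f (w n)).det) := by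
    apply monotone_nat_of_le_succ
    intro n
    exact Real.log_le_log (hposdef n).det_pos
      (DOptAux.det_step hp f (w n) (w (n+1)) (hwpos n) (hwpos (n+1))
        (hprob n).2 (hposdef n) (hposdef (n+1)) (hupdate n))
  have hbd : ∀ n, Real.log (infoMatrix f (w n)).det ≤
      Real.log (∑ i, vecMulVec (f i) (f i)).det := by
    intro n
    apply Real.log_le_log (hposdef n).det_pos
    apply DOptAux.det_le_det_of_sub (hposdef n).posSemidef
    have e : (∑ i, vecMulVec (f i) (f i)) - infoMatrix f (w n)
        = ∑ i, (1 - w n i) • vecMulVec (f i) (f i) := by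
      rw [infoMatrix, ← Finset.sum_sub_distrib]
      exact Finset.sum_congr rfl fun i _ => by rw [sub_smul, one_smul]
    rw [e]
    apply DOptAux.posSemidef_sum
    intro i _
    apply DOptAux.posSemidef_smul_vecMulVec
    have : w n i ≤ 1 := by
      rw [← (hprob n).2]
      exact Finset.single_le_sum (fun j _ => ((hprob n).1 j)) (Finset.mem_univ i)
    linarith
  have hb : BddAbove (Set.range fun n => Real.log (infoMatrix f (w n)).det) := by
    refine ⟨Real.log (∑ i, vecMulVec (f i) (f i)).det, ?_⟩
    rintro x ⟨n, rfl⟩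
    exact hbd n
  exact ⟨hmono, hbd, ⟨_, tendsto_atTop_ciSup hmono hb⟩⟩
end
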